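/- arXiv:2508.13865 — 3 statements merged into one kernel-verified Lean document; each statement's English description precedes it below -/
import Mathlib

section
/- Let π = (p_1,p_2) ∈ Π(p,2) and let τ = (12) ∈ S_2 be the transposition. Then the Zariski closure of G²·C_{π,τ} is contained in the Zariski closure of the graph Γ. -/
open Matrix MvPolynomial

/-- The space of `n`-tuples of `q × q` complex matrices (`n`-matrices). -/
abbrev MatT (n q : ℕ) : Type := Fin n → Matrix (Fin q) (Fin q) ℂ

/-- Index type for the coordinates on `MatT n q`. -/
abbrev Idx (n q : ℕ) : Type := Fin n × Fin q × Fin q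

/-- Coordinates of an `n`-matrix. -/
def coordsV {n q : ℕ} (A : MatT n q) : Idx n q → ℂ := fun x => A x.1 x.2.1 x.2.2

/-- Coordinates on the product `MatT n q × MatT n q`. -/
def coordsVV {n q : ℕ} (AA : MatT n q × MatT n q) : (Idx n q ⊕ Idx n q) → ℂ :=
  Sum.elim (coordsV AA.1) (coordsV AA.2)

/-- The Zariski topology on the affine space `ι → ℂ`: the topology generated by the
complements of zero loci of polynomials (its closed sets are the common zero loci of
arbitrary collections of polynomials). -/
def zariskiOn (ι : Type) : TopologicalSpace (ι → ℂ) :=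
  TopologicalSpace.generateFrom
    {U | ∃ P : MvPolynomial ι ℂ, U = {x | MvPolynomial.eval x P ≠ 0}}

/-- The Zariski topology on `MatT n q`, transported along coordinates. -/
noncomputable def topV (n q : ℕ) : TopologicalSpace (MatT n q) :=
  TopologicalSpace.induced coordsV (zariskiOn (Idx n q))

/-- The Zariski topology on `MatT n q × MatT n q`. -/
noncomputable def topVV (n q : ℕ) : TopologicalSpace (MatT n q × MatT n q) :=
  TopologicalSpace.induced coordsVV (zariskiOn (Idx n q ⊕ Idx n q))

/-- Zariski closure in `MatT n q`. -/
noncomputable def zClosureV {n q : ℕ} (s : Set (MatT n q)) : Set (MatT n q) :=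
  @closure _ (topV n q) s

/-- Zariski closure in `MatT n q × MatT n q`. -/
noncomputable def zClosureVV {n q : ℕ} (s : Set (MatT n q × MatT n q)) :
    Set (MatT n q × MatT n q) :=
  @closure _ (topVV n q) s

/-- Zariski-closedness in `MatT n q`. -/
def zIsClosedV {n q : ℕ} (s : Set (MatT n q)) : Prop := @IsClosed _ (topV n q) s

/-- Zariski-closedness in `MatT n q × MatT n q`. -/
def zIsClosedVV {n q : ℕ} (s : Set (MatT n q × MatT n q)) : Prop := @IsClosed _ (topVV n q) s

/-- Krull dimension of a subset of `MatT n q` (subspace Zariski topology). -/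
noncomputable def dimV {n q : ℕ} (s : Set (MatT n q)) : WithBot ℕ∞ :=
  @topologicalKrullDim s (TopologicalSpace.induced Subtype.val (topV n q))

/-- Krull dimension of a subset of `MatT n q × MatT n q` (subspace Zariski topology). -/
noncomputable def dimVV {n q : ℕ} (s : Set (MatT n q × MatT n q)) : WithBot ℕ∞ :=
  @topologicalKrullDim s (TopologicalSpace.induced Subtype.val (topVV n q))

/-- The subdimension of a topological space: the infimum of the dimensions of its
irreducible components. -/
noncomputable def sdimAux (X : Type*) [TopologicalSpace X] : WithBot ℕ∞ :=
  ⨅ C ∈ irreducibleComponents X, topologicalKrullDim C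

/-- The subdimension of a subset of `MatT n q × MatT n q`: the minimum of the dimensions
of its irreducible components, in the subspace Zariski topology. -/
noncomputable def sdimVV {n q : ℕ} (s : Set (MatT n q × MatT n q)) : WithBot ℕ∞ :=
  @sdimAux s (TopologicalSpace.induced Subtype.val (topVV n q))

/-- Simultaneous conjugation action of `GL_q(ℂ)` on `MatT n q`. -/
noncomputable def gconj {n q : ℕ} (g : Matrix.GeneralLinearGroup (Fin q) ℂ) (A : MatT n q) :
    MatT n q :=
  fun m => (g : Matrix (Fin q) (Fin q) ℂ) * A m *
    ((g⁻¹ : Matrix.GeneralLinearGroup (Fin q) ℂ) : Matrix (Fin q) (Fin q) ℂ)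

/-- `f : MatT n q → ℂ` is a polynomial function. -/
def IsPolyFun {n q : ℕ} (f : MatT n q → ℂ) : Prop :=
  ∃ P : MvPolynomial (Idx n q) ℂ, ∀ A, f A = MvPolynomial.eval (coordsV A) P

/-- Invariance under simultaneous conjugation. -/
def IsConjInvariant (n q : ℕ) (f : MatT n q → ℂ) : Prop :=
  ∀ (g : Matrix.GeneralLinearGroup (Fin q) ℂ) (A : MatT n q), f (gconj g A) = f A

/-- `S` is a separating set for `ℂ[V]^G`, `G = GL_q(ℂ)` acting by simultaneous conjugation. -/
def IsSeparatingSet (n q : ℕ) (S : Set (MatT n q → ℂ)) : Prop :=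
  (∀ f ∈ S, IsPolyFun f ∧ IsConjInvariant n q f) ∧
  ∀ v w : MatT n q, (∀ f ∈ S, f v = f w) →
    ∀ f : MatT n q → ℂ, IsPolyFun f → IsConjInvariant n q f → f v = f w

/-- The separating variety for `GL_q(ℂ)` acting on `MatT n q` by simultaneous conjugation. -/
def SepVar (n q : ℕ) : Set (MatT n q × MatT n q) :=
  {vw | ∀ f : MatT n q → ℂ, IsPolyFun f → IsConjInvariant n q f → f vw.1 = f vw.2}

/-- `q : Fin k → ℕ` is an ordered partition of `p` into `k` (nonzero) parts. -/
def IsOrderedPartition {k : ℕ} (p : ℕ) (q : Fin k → ℕ) : Prop :=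
  (∀ i, 0 < q i) ∧ ∑ i, q i = p

/-- Offset of the `i`-th block of the partition `q`. -/
def off {k : ℕ} (q : Fin k → ℕ) (i : Fin k) : ℕ :=
  ∑ j : Fin k, if j < i then q j else 0

/-- The `(a,b)` entry of the `(i,j)`-th `q`-block of the `n`-matrix `A`
(junk value `0` out of range). -/
def blockEntry {n p k : ℕ} (q : Fin k → ℕ) (A : MatT n p) (m : Fin n) (i j : Fin k)
    (a b : ℕ) : ℂ :=
  if h : off q i + a < p ∧ off q j + b < p
  then A m ⟨off q i + a, h.1⟩ ⟨off q j + b, h.2⟩ else 0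

/-- The `(i,j)`-th `q`-block of `A`, realized as an `n`-tuple of `d × e` matrices. -/
def blockAt {n p k : ℕ} (q : Fin k → ℕ) (A : MatT n p) (i j : Fin k) (d e : ℕ) :
    Fin n → Matrix (Fin d) (Fin e) ℂ :=
  fun m => Matrix.of fun a b => blockEntry q A m i j (a : ℕ) (b : ℕ)

/-- `V_π`: the subspace of `π`-block upper triangular `n`-matrices. -/
def VPi (n p : ℕ) {k : ℕ} (q : Fin k → ℕ) : Set (MatT n p) :=
  {A | ∀ (m : Fin n) (i j : Fin k), j < i → ∀ a b : ℕ, a < q i → b < q j →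
    blockEntry q A m i j a b = 0}

/-- The partition `σ(π)`: the parts of `q` rearranged by `σ`, so that the part of
size `q i` is placed in position `σ i`. -/
def permutePart {k : ℕ} (σ : Equiv.Perm (Fin k)) (q : Fin k → ℕ) : Fin k → ℕ :=
  fun j => q (σ.symm j)

/-- The set `C_{π,σ}` of pairs `(A, A')` with `A ∈ V_π`, `A' ∈ V_{σ(π)}`, and
`B_{i,i} = B'_{σ(i),σ(i)}` for all `i`. -/
def CSet (n p : ℕ) {k : ℕ} (q : Fin k → ℕ) (σ : Equiv.Perm (Fin k)) :
    Set (MatT n p × MatT n p) :=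
  {AA | AA.1 ∈ VPi n p q ∧ AA.2 ∈ VPi n p (permutePart σ q) ∧
    ∀ (m : Fin n) (i : Fin k) (a b : ℕ), a < q i → b < q i →
      blockEntry q AA.1 m i i a b = blockEntry (permutePart σ q) AA.2 m (σ i) (σ i) a b}

/-- The orbit set `G·s` of a subset `s ⊆ MatT n p`. -/
def GOrbit (n p : ℕ) (s : Set (MatT n p)) : Set (MatT n p) :=
  {x | ∃ (g : Matrix.GeneralLinearGroup (Fin p) ℂ) (A : MatT n p), A ∈ s ∧ x = gconj g A}

/-- The orbit set `G²·s` of a subset `s ⊆ MatT n p × MatT n p`. -/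
def G2Orbit {n p : ℕ} (s : Set (MatT n p × MatT n p)) : Set (MatT n p × MatT n p) :=
  {x | ∃ (g g' : Matrix.GeneralLinearGroup (Fin p) ℂ) (AA : MatT n p × MatT n p),
    AA ∈ s ∧ x = (gconj g AA.1, gconj g' AA.2)}

/-- The graph `Γ = {(A, g·A)}` of the conjugation action. -/
def graphG (n q : ℕ) : Set (MatT n q × MatT n q) :=
  {x | ∃ (A : MatT n q) (g : Matrix.GeneralLinearGroup (Fin q) ℂ), x = (A, gconj g A)}

/-- Entry of a `q`-block of a single matrix (junk value `0` out of range). -/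
def blockEntryM {p k : ℕ} (q : Fin k → ℕ) (M : Matrix (Fin p) (Fin p) ℂ) (i j : Fin k)
    (a b : ℕ) : ℂ :=
  if h : off q i + a < p ∧ off q j + b < p
  then M ⟨off q i + a, h.1⟩ ⟨off q j + b, h.2⟩ else 0

/-- The parabolic subgroup `P_π` of `π`-block upper triangular invertible matrices. -/
def Parab {p k : ℕ} (q : Fin k → ℕ) : Set (Matrix.GeneralLinearGroup (Fin p) ℂ) :=
  {g | ∀ (i j : Fin k), j < i → ∀ a b : ℕ, a < q i → b < q j →
    blockEntryM q (g : Matrix (Fin p) (Fin p) ℂ) i j a b = 0}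

/-- The orbit set `(P_π × P_{σ(π)})·C_{π,σ}`. -/
def P2Orbit (n p : ℕ) {k : ℕ} (q : Fin k → ℕ) (σ : Equiv.Perm (Fin k)) :
    Set (MatT n p × MatT n p) :=
  {x | ∃ g ∈ Parab q, ∃ g' ∈ Parab (permutePart σ q), ∃ AA ∈ CSet n p q σ,
    x = (gconj g AA.1, gconj g' AA.2)}

/-- One merge step of ordered partitions: the second is obtained from the first by
merging two adjacent parts. -/
def IsMergeStep : (Σ k : ℕ, Fin k → ℕ) → (Σ k : ℕ, Fin k → ℕ) → Prop := fun a b =>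
  ∃ (k : ℕ) (q : Fin (k + 1) → ℕ) (q' : Fin k → ℕ) (j : Fin k),
    a = ⟨k + 1, q⟩ ∧ b = ⟨k, q'⟩ ∧
    (∀ i : Fin k, (i : ℕ) < (j : ℕ) → q' i = q i.castSucc) ∧
    q' j = q j.castSucc + q j.succ ∧
    (∀ i : Fin k, (j : ℕ) < (i : ℕ) → q' i = q i.succ)

/-- The refinement order on ordered partitions: `π ≤ π̂` iff `π̂` is obtained from `π`
by repeatedly merging adjacent parts. -/
def PartLE (a b : Σ k : ℕ, Fin k → ℕ) : Prop := Relation.ReflTransGen IsMergeStep a b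

/-- An `n`-matrix is simple if no nonzero proper subspace of `ℂ^q` is invariant under
all of its components. -/
def IsSimpleTuple {n q : ℕ} (B : MatT n q) : Prop :=
  ∀ W : Submodule ℂ (Fin q → ℂ),
    (∀ (m : Fin n) (v : Fin q → ℂ), v ∈ W → (B m).mulVec v ∈ W) → W = ⊥ ∨ W = ⊤

/-- Transport an `n`-matrix along an equality of sizes. -/
def castTuple {n a b : ℕ} (h : a = b) (B : MatT n a) : MatT n b :=
  fun m => Matrix.reindex (finCongr h) (finCongr h) (B m)

/-- Two `n`-matrices (of possibly different sizes) are isomorphic if they have the same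
size and are simultaneously conjugate. -/
def TupleIso {n a b : ℕ} (B : MatT n a) (B' : MatT n b) : Prop :=
  ∃ (h : a = b) (g : Matrix.GeneralLinearGroup (Fin b) ℂ), gconj g (castTuple h B) = B'

/-- An `n`-matrix is decomposable if `ℂ^q` is a direct sum of two nonzero subspaces,
each invariant under all of its components. -/
def IsDecomposableTuple {n q : ℕ} (B : MatT n q) : Prop :=
  ∃ W W' : Submodule ℂ (Fin q → ℂ), W ≠ ⊥ ∧ W' ≠ ⊥ ∧ IsCompl W W' ∧
    (∀ (m : Fin n) (v : Fin q → ℂ), v ∈ W → (B m).mulVec v ∈ W) ∧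
    (∀ (m : Fin n) (v : Fin q → ℂ), v ∈ W' → (B m).mulVec v ∈ W')

/-- The `d × d` principal submatrix of `A` starting at row/column `o`
(junk value `0` out of range). -/
def subSquare {n p : ℕ} (A : MatT n p) (o d : ℕ) : MatT n d :=
  fun m => Matrix.of fun a b : Fin d =>
    if h : o + (a : ℕ) < p ∧ o + (b : ℕ) < p
    then A m ⟨o + (a : ℕ), h.1⟩ ⟨o + (b : ℕ), h.2⟩ else 0

/-- `A ∈ V_π` is maximally general for `π`: its diagonal `π`-blocks are simple and
pairwise non-isomorphic, and each pair of consecutive diagonal blocks together with the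
block between them forms an indecomposable `n`-matrix. -/
def MaxGeneral (n p : ℕ) {k : ℕ} (q : Fin k → ℕ) (A : MatT n p) : Prop :=
  A ∈ VPi n p q ∧
  (∀ i : Fin k, IsSimpleTuple (blockAt q A i i (q i) (q i))) ∧
  (∀ i j : Fin k, i ≠ j →
    ¬ TupleIso (blockAt q A i i (q i) (q i)) (blockAt q A j j (q j) (q j))) ∧
  (∀ (i : Fin k) (h : (i : ℕ) + 1 < k),
    ¬ IsDecomposableTuple (subSquare A (off q i) (q i + q ⟨(i : ℕ) + 1, h⟩)))

/-- `σ` is a partial reversal: in one-line notation it contains a substring `[l+1, l]`. -/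
def IsPartialReversal {k : ℕ} (σ : Equiv.Perm (Fin k)) : Prop :=
  ∃ (l : ℕ) (h1 : l + 1 < k),
    ((σ ⟨l + 1, h1⟩ : Fin k) : ℕ) + 1 = ((σ ⟨l, Nat.lt_of_succ_lt h1⟩ : Fin k) : ℕ)

/-- The preorder `⪯` on pairs `(π,σ)`: containment of the Zariski closures of the
corresponding orbit sets `G²·C_{π,σ}`. -/
def PairLE (n p : ℕ) {k k' : ℕ} (q : Fin k → ℕ) (σ : Equiv.Perm (Fin k))
    (q' : Fin k' → ℕ) (σ' : Equiv.Perm (Fin k')) : Prop :=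
  zClosureVV (G2Orbit (CSet n p q σ)) ⊆ zClosureVV (G2Orbit (CSet n p q' σ'))

/-- The graph of the action of the diagonal torus `T ≤ GL_p(ℂ)` on `MatT n p`. -/
def graphT (n p : ℕ) : Set (MatT n p × MatT n p) :=
  {x | ∃ (A : MatT n p) (t : Matrix.GeneralLinearGroup (Fin p) ℂ),
    (∀ i j : Fin p, i ≠ j → (t : Matrix (Fin p) (Fin p) ℂ) i j = 0) ∧ x = (A, gconj t A)}

/-- The action of `H = SL_p(ℂ) × SL_p(ℂ)` on `MatT n p` by `(h₁,h₂)·A = h₁ A h₂⁻¹`. -/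
noncomputable def hAct {n q : ℕ}
    (h : Matrix.SpecialLinearGroup (Fin q) ℂ × Matrix.SpecialLinearGroup (Fin q) ℂ)
    (A : MatT n q) : MatT n q :=
  fun m => (h.1 : Matrix (Fin q) (Fin q) ℂ) * A m *
    ((h.2⁻¹ : Matrix.SpecialLinearGroup (Fin q) ℂ) : Matrix (Fin q) (Fin q) ℂ)

/-- Invariance under the `SL_p(ℂ) × SL_p(ℂ)` action (matrix semi-invariants). -/
def IsSemiInvariant (n q : ℕ) (f : MatT n q → ℂ) : Prop :=
  ∀ (h : Matrix.SpecialLinearGroup (Fin q) ℂ × Matrix.SpecialLinearGroup (Fin q) ℂ)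
    (A : MatT n q), f (hAct h A) = f A

/-- `S` is a separating set for the algebra of `p × p` matrix semi-invariants. -/
def IsSemiSepSet (n q : ℕ) (S : Set (MatT n q → ℂ)) : Prop :=
  (∀ f ∈ S, IsPolyFun f ∧ IsSemiInvariant n q f) ∧
  ∀ v w : MatT n q, (∀ f ∈ S, f v = f w) →
    ∀ f : MatT n q → ℂ, IsPolyFun f → IsSemiInvariant n q f → f v = f w

lemma zariski_basis (ι : Type) :
    @TopologicalSpace.IsTopologicalBasis (ι → ℂ) (zariskiOn ι)
      {U | ∃ P : MvPolynomial ι ℂ, U = {x | MvPolynomial.eval x P ≠ 0}} := by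
  letI := zariskiOn ι
  refine ⟨?_, ?_, rfl⟩
  · rintro U ⟨P, rfl⟩ V ⟨Q, rfl⟩ x hx
    refine ⟨{x | MvPolynomial.eval x (P*Q) ≠ 0}, ⟨P*Q, rfl⟩, ?_, ?_⟩
    · simp only [Set.mem_setOf_eq, _root_.map_mul]
      exact mul_ne_zero hx.1 hx.2
    · intro y hy
      simp only [Set.mem_setOf_eq, _root_.map_mul, mul_ne_zero_iff] at hy
      exact ⟨hy.1, hy.2⟩
  · refine Set.eq_univ_of_forall fun x => ?_
    exact ⟨{y | MvPolynomial.eval y (1 : MvPolynomial ι ℂ) ≠ 0}, ⟨1, rfl⟩, by simp⟩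

lemma zar_curve {ι : Type} (F : Set (ι → ℂ)) (hF : @IsClosed _ (zariskiOn ι) F)
    (u v : ι → ℂ) (h : ∀ t : ℂ, t ≠ 0 → (fun i => u i + t * v i) ∈ F) : u ∈ F := by
  letI := zariskiOn ι
  by_contra hu
  have hop : @IsOpen _ (zariskiOn ι) Fᶜ := hF.isOpen_compl
  obtain ⟨U, ⟨P, rfl⟩, hxU, hUF⟩ :=
    (zariski_basis ι).exists_subset_of_mem_open hu hop
  set Q : Polynomial ℂ := MvPolynomial.eval₂ (Polynomial.C)
    (fun i => Polynomial.C (u i) + Polynomial.X * Polynomial.C (v i)) P with hQdef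
  have hevalQ : ∀ t : ℂ, Polynomial.eval t Q
      = MvPolynomial.eval (fun i => u i + t * v i) P := by
    intro t
    rw [hQdef, MvPolynomial.polynomial_eval_eval₂]
    have : (Polynomial.evalRingHom t).comp Polynomial.C = RingHom.id ℂ := by
      ext a; simp
    rw [this]
    show MvPolynomial.eval₂ (RingHom.id ℂ) _ P = _
    rw [MvPolynomial.eval₂_eq_eval_map, MvPolynomial.map_id]
    have hfun : (fun s => Polynomial.eval t
        (Polynomial.C (u s) + Polynomial.X * Polynomial.C (v s))) = fun i => u i + t * v i := by
      funext i
      simp only [Polynomial.eval_add, Polynomial.eval_mul, Polynomial.eval_X, Polynomial.eval_C]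
    rw [hfun]
  have hQ0 : Q = 0 := by
    apply Polynomial.eq_zero_of_infinite_isRoot
    apply Set.Infinite.mono (s := {(0:ℂ)}ᶜ)
    · intro t ht
      have htne : t ≠ 0 := ht
      have hin : (fun i => u i + t * v i) ∈ F := h t htne
      have : MvPolynomial.eval (fun i => u i + t * v i) P = 0 := by
        by_contra hne
        exact hUF hne hin
      simpa [Polynomial.IsRoot, hevalQ t] using this
    · exact Set.Finite.infinite_compl (Set.finite_singleton 0)
  have : MvPolynomial.eval u P = 0 := by
    have h0 := hevalQ 0
    rw [hQ0] at h0
    simpa using h0.symm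
  exact hxU this

lemma curve_mem_ind {α : Type*} {ι : Type} (f : α → (ι → ℂ)) (S : Set α) (x : ℂ → α)
    (u v : ι → ℂ) (hcoord : ∀ t, f (x t) = fun i => u i + t * v i)
    (hmem : ∀ t : ℂ, t ≠ 0 → x t ∈ S) :
    x 0 ∈ @closure _ (TopologicalSpace.induced f (zariskiOn ι)) S := by
  letI := TopologicalSpace.induced f (zariskiOn ι)
  have hcl : IsClosed (closure S) := isClosed_closure
  obtain ⟨F, hF, hpre⟩ := (@isClosed_induced_iff _ _ (zariskiOn ι) (closure S) f).mp hcl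
  rw [← hpre]
  show f (x 0) ∈ F
  have h0 : f (x 0) = u := by
    rw [hcoord 0]; funext i; simp
  rw [h0]
  apply zar_curve F hF u v
  intro t ht
  have : f (x t) ∈ F := by
    rw [← Set.mem_preimage, hpre]
    exact subset_closure (hmem t ht)
  rwa [hcoord t] at this

lemma curve_mem {n p : ℕ} (S : Set (MatT n p × MatT n p)) (U1 V1 U2 V2 : MatT n p)
    (h : ∀ t : ℂ, t ≠ 0 →
      ((fun m => U1 m + t • V1 m, fun m => U2 m + t • V2 m) : MatT n p × MatT n p) ∈ S) :
    (U1, U2) ∈ zClosureVV S := by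
  have key := curve_mem_ind (ι := Idx n p ⊕ Idx n p) coordsVV S
      (fun t => ((fun m => U1 m + t • V1 m, fun m => U2 m + t • V2 m) : MatT n p × MatT n p))
      (coordsVV (U1, U2)) (coordsVV (V1, V2)) ?_ h
  · have hx0 : ((fun m => U1 m + (0:ℂ) • V1 m, fun m => U2 m + (0:ℂ) • V2 m)
        : MatT n p × MatT n p) = (U1, U2) := by
      refine Prod.ext ?_ ?_ <;> · funext m; simp
    rw [hx0] at key
    exact key
  · intro t
    funext idx
    rcases idx with idx | idx <;>
      simp [coordsVV, coordsV, Matrix.add_apply, Matrix.smul_apply, smul_eq_mul]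

lemma gconj_mul {n p : ℕ} (g h : Matrix.GeneralLinearGroup (Fin p) ℂ) (A : MatT n p) :
    gconj (g * h) A = gconj g (gconj h A) := by
  funext m
  simp [gconj, _root_.mul_inv_rev, Units.val_mul, Matrix.mul_assoc]

lemma gconj_inv_gconj {n p : ℕ} (g : Matrix.GeneralLinearGroup (Fin p) ℂ) (A : MatT n p) :
    gconj g⁻¹ (gconj g A) = A := by
  funext m
  simp only [gconj, inv_inv]
  rw [← Matrix.mul_assoc, ← Matrix.mul_assoc]
  rw [show ((g⁻¹ : Matrix.GeneralLinearGroup (Fin p) ℂ) : Matrix (Fin p) (Fin p) ℂ)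
      * (g : Matrix (Fin p) (Fin p) ℂ) = 1 from Units.inv_mul g]
  rw [Matrix.one_mul, Matrix.mul_assoc]
  rw [show ((g⁻¹ : Matrix.GeneralLinearGroup (Fin p) ℂ) : Matrix (Fin p) (Fin p) ℂ)
      * (g : Matrix (Fin p) (Fin p) ℂ) = 1 from Units.inv_mul g]
  rw [Matrix.mul_one]

lemma gconj_add_smul {n p : ℕ} (g : Matrix.GeneralLinearGroup (Fin p) ℂ) (A N : MatT n p)
    (t : ℂ) :
    gconj g (fun m => A m + t • N m) = fun m => gconj g A m + t • gconj g N m := by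
  funext m
  simp only [gconj, Matrix.mul_add, Matrix.add_mul]
  congr 1
  rw [Matrix.mul_smul, Matrix.smul_mul]

def eRot {p : ℕ} (p1 p2 : ℕ) (hs : p1 + p2 = p) : Fin p ≃ Fin p where
  toFun i := if _ : (i : ℕ) < p1 then ⟨(i : ℕ) + p2, by omega⟩
    else ⟨(i : ℕ) - p1, by have := i.isLt; omega⟩
  invFun j := if _ : (j : ℕ) < p2 then ⟨(j : ℕ) + p1, by omega⟩
    else ⟨(j : ℕ) - p2, by have := j.isLt; omega⟩
  left_inv := by
    intro i
    have hi := i.isLt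
    dsimp only
    by_cases h : (i : ℕ) < p1
    · rw [dif_pos h, dif_neg (by simp)]
      exact Fin.ext (by simp)
    · rw [dif_neg h, dif_pos (by simp; omega)]
      exact Fin.ext (by simp; omega)
  right_inv := by
    intro j
    have hj := j.isLt
    dsimp only
    by_cases h : (j : ℕ) < p2
    · rw [dif_pos h, dif_neg (by simp)]
      exact Fin.ext (by simp)
    · rw [dif_neg h, dif_pos (by simp; omega)]
      exact Fin.ext (by simp; omega)

lemma mul_left_gen {p : ℕ} (e : Equiv.Perm (Fin p)) (f : Fin p → ℂ)
    (M : Matrix (Fin p) (Fin p) ℂ) :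
    (Matrix.of fun r c => if r = e c then f c else 0) * M
      = Matrix.of fun r c => f (e.symm r) * M (e.symm r) c := by
  ext r c
  simp only [Matrix.mul_apply, Matrix.of_apply]
  rw [Finset.sum_eq_single (e.symm r)]
  · rw [if_pos (by simp)]
  · intro j _ hj
    rw [if_neg (fun hc => hj (by rw [hc, Equiv.symm_apply_apply])), zero_mul]
  · intro hr; exact absurd (Finset.mem_univ _) hr

lemma mul_right_gen {p : ℕ} (e : Equiv.Perm (Fin p)) (f : Fin p → ℂ)
    (M : Matrix (Fin p) (Fin p) ℂ) :
    M * (Matrix.of fun r c => if r = e c then f c else 0)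
      = Matrix.of fun r c => M r (e c) * f c := by
  ext r c
  simp only [Matrix.mul_apply, Matrix.of_apply]
  rw [Finset.sum_eq_single (e c)]
  · rw [if_pos rfl]
  · intro j _ hj
    rw [if_neg hj, mul_zero]
  · intro hr; exact absurd (Finset.mem_univ _) hr

def NMat {n p : ℕ} (p1 p2 : ℕ) (hs : p1 + p2 = p) (A' : MatT n p) : MatT n p :=
  fun m => Matrix.of fun i j : Fin p =>
    if h : p1 ≤ (i : ℕ) ∧ (j : ℕ) < p1
    then A' m ⟨(i : ℕ) - p1, by have := i.isLt; omega⟩ ⟨(j : ℕ) + p2, by omega⟩ else 0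

def MMat {n p : ℕ} (p1 p2 : ℕ) (hs : p1 + p2 = p) (A : MatT n p) : MatT n p :=
  fun m => Matrix.of fun r c : Fin p =>
    if h : p2 ≤ (r : ℕ) ∧ (c : ℕ) < p2
    then A m ⟨(r : ℕ) - p2, by have := r.isLt; omega⟩ ⟨(c : ℕ) + p1, by omega⟩ else 0

def permScaled {p : ℕ} (e : Equiv.Perm (Fin p)) (f : Fin p → ℂ) :
    Matrix (Fin p) (Fin p) ℂ :=
  Matrix.of fun r c => if r = e c then f c else 0

lemma permScaled_mul_permScaled_symm {p : ℕ} (e : Equiv.Perm (Fin p)) (f finv : Fin p → ℂ)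
    (hfi : ∀ i, f i * finv i = 1) :
    permScaled e f * permScaled e.symm (fun c => finv (e.symm c)) = 1 := by
  unfold permScaled
  rw [mul_right_gen]
  ext r c
  simp only [Matrix.of_apply, Equiv.apply_symm_apply, Matrix.one_apply]
  by_cases h : r = c
  · rw [if_pos h, if_pos h, hfi]
  · rw [if_neg h, if_neg h, zero_mul]

lemma permScaled_symm_mul_permScaled {p : ℕ} (e : Equiv.Perm (Fin p)) (f finv : Fin p → ℂ)
    (hfi : ∀ i, finv i * f i = 1) :
    permScaled e.symm (fun c => finv (e.symm c)) * permScaled e f = 1 := by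
  unfold permScaled
  rw [mul_right_gen]
  ext r c
  simp only [Matrix.of_apply, Equiv.symm_apply_apply, Matrix.one_apply]
  by_cases h : r = c
  · rw [if_pos h, h, hfi, if_pos rfl]
  · rw [if_neg h, if_neg h, zero_mul]

lemma permScaled_conj {p : ℕ} (e : Equiv.Perm (Fin p)) (f finv : Fin p → ℂ)
    (X W : Matrix (Fin p) (Fin p) ℂ)
    (hent : ∀ i j : Fin p, f i * X i j * finv j = W (e i) (e j)) :
    permScaled e f * X * permScaled e.symm (fun c => finv (e.symm c)) = W := by
  unfold permScaled
  rw [mul_left_gen, mul_right_gen]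
  ext r c
  simp only [Matrix.of_apply]
  have := hent (e.symm r) (e.symm c)
  simp only [Equiv.apply_symm_apply] at this
  exact this

lemma key_entry {n p : ℕ} (p1 p2 : ℕ) (hs : p1 + p2 = p)
    (A A' : MatT n p) (t : ℂ) (ht : t ≠ 0)
    (H1 : ∀ (m : Fin n) (r c : Fin p), p1 ≤ (r : ℕ) → (c : ℕ) < p1 → A m r c = 0)
    (H2 : ∀ (m : Fin n) (r c : Fin p), p2 ≤ (r : ℕ) → (c : ℕ) < p2 → A' m r c = 0)
    (H3 : ∀ (m : Fin n) (r c : Fin p), (hr : (r : ℕ) < p1) → (hc : (c : ℕ) < p1) →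
      A m r c = A' m ⟨(r : ℕ) + p2, by omega⟩ ⟨(c : ℕ) + p2, by omega⟩)
    (H4 : ∀ (m : Fin n) (r c : Fin p), p1 ≤ (r : ℕ) → p1 ≤ (c : ℕ) →
      A m r c = A' m ⟨(r : ℕ) - p1, by have := r.isLt; omega⟩
        ⟨(c : ℕ) - p1, by have := c.isLt; omega⟩)
    (m : Fin n) (i j : Fin p) :
    (if (i : ℕ) < p1 then t else 1) * ((A m + t • NMat p1 p2 hs A' m) i j)
      * (if (j : ℕ) < p1 then t⁻¹ else 1)
    = (A' m + t • MMat p1 p2 hs A m) (eRot p1 p2 hs i) (eRot p1 p2 hs j) := by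
  have hi := i.isLt
  have hj := j.isLt
  simp only [Matrix.add_apply, Matrix.smul_apply, smul_eq_mul, NMat, MMat, eRot,
    Matrix.of_apply, Equiv.coe_fn_mk]
  by_cases h1 : (i : ℕ) < p1 <;> by_cases h2 : (j : ℕ) < p1
  · rw [if_pos h1, if_pos h2, dif_pos h1, dif_pos h2, dif_neg (by omega),
      dif_neg (by simp only; omega)]
    rw [← H3 m i j h1 h2]
    field_simp
  · rw [if_pos h1, if_neg h2, dif_pos h1, dif_neg h2, dif_neg (by omega),
      dif_pos (by simp only; omega)]
    rw [H2 m ⟨(i : ℕ) + p2, by omega⟩ ⟨(j : ℕ) - p1, by omega⟩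
      (show p2 ≤ (i : ℕ) + p2 by omega) (show (j : ℕ) - p1 < p2 by omega)]
    rw [show (⟨(((⟨(i : ℕ) + p2, by omega⟩ : Fin p) : ℕ)) - p2, by omega⟩ : Fin p) = i from
      Fin.ext (by simp)]
    rw [show (⟨(((⟨(j : ℕ) - p1, by have := j.isLt; omega⟩ : Fin p) : ℕ)) + p1,
        by show (j : ℕ) - p1 + p1 < p; omega⟩ : Fin p) = j from Fin.ext (by simp; omega)]
    ring
  · rw [if_neg h1, if_pos h2, dif_neg h1, dif_pos h2, dif_pos (by omega),
      dif_neg (by simp only; omega)]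
    rw [H1 m i j (by omega) h2]
    field_simp
    ring
  · rw [if_neg h1, if_neg h2, dif_neg h1, dif_neg h2, dif_neg (by omega),
      dif_neg (by simp only; omega)]
    rw [H4 m i j (by omega) (by omega)]
    ring

noncomputable def GTu {p : ℕ} (p1 p2 : ℕ) (hs : p1 + p2 = p) (t : ℂ) (ht : t ≠ 0) :
    Matrix.GeneralLinearGroup (Fin p) ℂ :=
  ⟨permScaled (eRot p1 p2 hs) (fun c => if (c : ℕ) < p1 then t else 1),
   permScaled (eRot p1 p2 hs).symm
     (fun c => if (((eRot p1 p2 hs).symm c : Fin p) : ℕ) < p1 then t⁻¹ else 1),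
   permScaled_mul_permScaled_symm (eRot p1 p2 hs) (fun i => if (i : ℕ) < p1 then t else 1)
     (fun i => if (i : ℕ) < p1 then t⁻¹ else 1)
     (fun i => by by_cases h : (i : ℕ) < p1 <;>
       simp [h, mul_inv_cancel₀ ht]),
   permScaled_symm_mul_permScaled (eRot p1 p2 hs) (fun i => if (i : ℕ) < p1 then t else 1)
     (fun i => if (i : ℕ) < p1 then t⁻¹ else 1)
     (fun i => by by_cases h : (i : ℕ) < p1 <;>
       simp [h, inv_mul_cancel₀ ht])⟩

lemma gconj_GTu {n p : ℕ} (p1 p2 : ℕ) (hs : p1 + p2 = p)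
    (A A' : MatT n p) (t : ℂ) (ht : t ≠ 0)
    (H1 : ∀ (m : Fin n) (r c : Fin p), p1 ≤ (r : ℕ) → (c : ℕ) < p1 → A m r c = 0)
    (H2 : ∀ (m : Fin n) (r c : Fin p), p2 ≤ (r : ℕ) → (c : ℕ) < p2 → A' m r c = 0)
    (H3 : ∀ (m : Fin n) (r c : Fin p), (hr : (r : ℕ) < p1) → (hc : (c : ℕ) < p1) →
      A m r c = A' m ⟨(r : ℕ) + p2, by omega⟩ ⟨(c : ℕ) + p2, by omega⟩)
    (H4 : ∀ (m : Fin n) (r c : Fin p), p1 ≤ (r : ℕ) → p1 ≤ (c : ℕ) →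
      A m r c = A' m ⟨(r : ℕ) - p1, by have := r.isLt; omega⟩
        ⟨(c : ℕ) - p1, by have := c.isLt; omega⟩) :
    gconj (GTu p1 p2 hs t ht) (fun m => A m + t • NMat p1 p2 hs A' m)
      = fun m => A' m + t • MMat p1 p2 hs A m := by
  funext m
  show permScaled (eRot p1 p2 hs) (fun c => if (c : ℕ) < p1 then t else 1)
      * (A m + t • NMat p1 p2 hs A' m)
      * permScaled (eRot p1 p2 hs).symm
        (fun c => if (((eRot p1 p2 hs).symm c : Fin p) : ℕ) < p1 then t⁻¹ else 1)
    = A' m + t • MMat p1 p2 hs A m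
  exact permScaled_conj (eRot p1 p2 hs) (fun i => if (i : ℕ) < p1 then t else 1)
    (fun i => if (i : ℕ) < p1 then t⁻¹ else 1)
    (A m + t • NMat p1 p2 hs A' m) (A' m + t • MMat p1 p2 hs A m)
    (fun i j => key_entry p1 p2 hs A A' t ht H1 H2 H3 H4 m i j)

lemma blockEntry_eval {n p k : ℕ} (q : Fin k → ℕ) (A : MatT n p) (m : Fin n)
    (i j : Fin k) (a b : ℕ) (r c : Fin p)
    (hr : off q i + a = (r : ℕ)) (hc : off q j + b = (c : ℕ)) :
    blockEntry q A m i j a b = A m r c := by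
  unfold blockEntry
  rw [dif_pos ⟨hr ▸ r.isLt, hc ▸ c.isLt⟩]
  congr 1 <;> exact Fin.ext (by assumption)

theorem stmt10 (n p : ℕ) (hn : 2 ≤ n) (hp : 2 ≤ p) (q : Fin 2 → ℕ)
    (hq : IsOrderedPartition p q) :
    zClosureVV (G2Orbit (CSet n p q (Equiv.swap 0 1))) ⊆ zClosureVV (graphG n p) := by
  obtain ⟨hpos, hsum⟩ := hq
  set p1 := q 0 with hp1
  set p2 := q 1 with hp2
  have hs : p1 + p2 = p := by rw [← hsum, Fin.sum_univ_two]
  have hoff0 : off q 0 = 0 := by simp [off, Fin.sum_univ_two, Fin.lt_def]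
  have hoff1 : off q 1 = p1 := by simp [off, Fin.sum_univ_two, Fin.lt_def, hp1]
  set q' := permutePart (Equiv.swap 0 1) q with hq'
  have hq'0 : q' 0 = p2 := by simp [hq', permutePart, Equiv.swap_apply_left, hp2]
  have hq'1 : q' 1 = p1 := by simp [hq', permutePart, Equiv.swap_apply_right, hp1]
  have hoff'0 : off q' 0 = 0 := by simp [off, Fin.sum_univ_two, Fin.lt_def]
  have hoff'1 : off q' 1 = p2 := by
    simp [off, Fin.sum_univ_two, Fin.lt_def, hq'0]
  have hsub : G2Orbit (CSet n p q (Equiv.swap 0 1)) ⊆ zClosureVV (graphG n p) := by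
    rintro ⟨x1, x2⟩ ⟨g, g', ⟨A, A'⟩, hC, hxeq⟩
    obtain ⟨hVA, hVA', hdiag⟩ := hC
    rw [Prod.ext_iff] at hxeq
    obtain ⟨h1, h2⟩ := hxeq
    simp only at h1 h2
    subst h1; subst h2
    -- the four block conditions
    have H1 : ∀ (m : Fin n) (r c : Fin p), p1 ≤ (r : ℕ) → (c : ℕ) < p1 → A m r c = 0 := by
      intro m r c hr hc
      have hb := hVA m 1 0 (by decide) ((r : ℕ) - p1) (c : ℕ)
        (show (r : ℕ) - p1 < q 1 by have := r.isLt; omega) (show (c : ℕ) < q 0 from hc)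
      rwa [blockEntry_eval q A m 1 0 ((r : ℕ) - p1) (c : ℕ) r c
        (by rw [hoff1]; omega) (by rw [hoff0]; omega)] at hb
    have H2 : ∀ (m : Fin n) (r c : Fin p), p2 ≤ (r : ℕ) → (c : ℕ) < p2 → A' m r c = 0 := by
      intro m r c hr hc
      have hb := hVA' m 1 0 (by decide) ((r : ℕ) - p2) (c : ℕ)
        (show (r : ℕ) - p2 < q' 1 by rw [hq'1]; have := r.isLt; omega)
        (show (c : ℕ) < q' 0 by rw [hq'0]; exact hc)
      rwa [blockEntry_eval q' A' m 1 0 ((r : ℕ) - p2) (c : ℕ) r c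
        (by rw [hoff'1]; omega) (by rw [hoff'0]; omega)] at hb
    have H3 : ∀ (m : Fin n) (r c : Fin p), (hr : (r : ℕ) < p1) → (hc : (c : ℕ) < p1) →
        A m r c = A' m ⟨(r : ℕ) + p2, by omega⟩ ⟨(c : ℕ) + p2, by omega⟩ := by
      intro m r c hr hc
      have hb := hdiag m 0 (r : ℕ) (c : ℕ) (show (r : ℕ) < q 0 from hr)
        (show (c : ℕ) < q 0 from hc)
      rw [Equiv.swap_apply_left] at hb
      rwa [blockEntry_eval q A m 0 0 (r : ℕ) (c : ℕ) r c
          (by rw [hoff0]; omega) (by rw [hoff0]; omega),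
        blockEntry_eval q' A' m 1 1 (r : ℕ) (c : ℕ)
          ⟨(r : ℕ) + p2, by omega⟩ ⟨(c : ℕ) + p2, by omega⟩
          (by rw [hoff'1]; show p2 + (r : ℕ) = (r : ℕ) + p2; omega)
          (by rw [hoff'1]; show p2 + (c : ℕ) = (c : ℕ) + p2; omega)] at hb
    have H4 : ∀ (m : Fin n) (r c : Fin p), p1 ≤ (r : ℕ) → p1 ≤ (c : ℕ) →
        A m r c = A' m ⟨(r : ℕ) - p1, by have := r.isLt; omega⟩
          ⟨(c : ℕ) - p1, by have := c.isLt; omega⟩ := by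
      intro m r c hr hc
      have hb := hdiag m 1 ((r : ℕ) - p1) ((c : ℕ) - p1)
        (show (r : ℕ) - p1 < q 1 by have := r.isLt; omega)
        (show (c : ℕ) - p1 < q 1 by have := c.isLt; omega)
      rw [Equiv.swap_apply_right] at hb
      rwa [blockEntry_eval q A m 1 1 ((r : ℕ) - p1) ((c : ℕ) - p1) r c
          (by rw [hoff1]; omega) (by rw [hoff1]; omega),
        blockEntry_eval q' A' m 0 0 ((r : ℕ) - p1) ((c : ℕ) - p1)
          ⟨(r : ℕ) - p1, by have := r.isLt; omega⟩ ⟨(c : ℕ) - p1, by have := c.isLt; omega⟩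
          (by rw [hoff'0]; show 0 + ((r : ℕ) - p1) = (r : ℕ) - p1; omega)
          (by rw [hoff'0]; show 0 + ((c : ℕ) - p1) = (c : ℕ) - p1; omega)] at hb
    -- the curve
    apply curve_mem (graphG n p) (gconj g A) (gconj g (NMat p1 p2 hs A'))
      (gconj g' A') (gconj g' (MMat p1 p2 hs A))
    intro t ht
    rw [show (fun m => gconj g A m + t • gconj g (NMat p1 p2 hs A') m)
        = gconj g (fun m => A m + t • NMat p1 p2 hs A' m) from
      (gconj_add_smul g A (NMat p1 p2 hs A') t).symm]
    rw [show (fun m => gconj g' A' m + t • gconj g' (MMat p1 p2 hs A) m)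
        = gconj g' (fun m => A' m + t • MMat p1 p2 hs A m) from
      (gconj_add_smul g' A' (MMat p1 p2 hs A) t).symm]
    refine ⟨gconj g (fun m => A m + t • NMat p1 p2 hs A' m),
      g' * GTu p1 p2 hs t ht * g⁻¹, ?_⟩
    have : gconj (g' * GTu p1 p2 hs t ht * g⁻¹)
        (gconj g (fun m => A m + t • NMat p1 p2 hs A' m))
        = gconj g' (fun m => A' m + t • MMat p1 p2 hs A m) := by
      rw [gconj_mul, gconj_mul, gconj_inv_gconj,
        gconj_GTu p1 p2 hs A A' t ht H1 H2 H3 H4]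
    rw [this]
  letI := topVV n p
  exact closure_minimal hsub isClosed_closure
end

section
/- Let π ∈ Π(p,k) and let σ ∈ S_k be the order-reversing permutation σ(i) = k+1−i. Then the Zariski closure of G²·C_{π,σ} is contained in the Zariski closure of the graph Γ. -/
open Matrix MvPolynomial

namespace SAux

def Qn {k : ℕ} (q : Fin k → ℕ) (j : ℕ) : ℕ := if h : j < k then q ⟨j, h⟩ else 0

def offN {k : ℕ} (q : Fin k → ℕ) (i : ℕ) : ℕ := ∑ j ∈ Finset.range i, Qn q j

theorem off_eq_offN {k : ℕ} (q : Fin k → ℕ) (i : Fin k) : off q i = offN q i := by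
  rw [off, offN]
  have step1 : (∑ j : Fin k, if j < i then q j else 0)
      = ∑ j : Fin k, (fun l : ℕ => if l < (i : ℕ) then Qn q l else 0) (j : ℕ) := by
    apply Finset.sum_congr rfl
    intro j _
    simp only [Fin.lt_def, Qn, Fin.is_lt, dif_pos, Fin.eta]
  rw [step1, Fin.sum_univ_eq_sum_range (fun l => if l < (i : ℕ) then Qn q l else 0) k,
    ← Finset.sum_filter]
  have : Finset.filter (fun j => j < (i : ℕ)) (Finset.range k) = Finset.range i := by
    ext j; simp only [Finset.mem_filter, Finset.mem_range]
    omega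
  rw [this]

theorem offN_mono {k : ℕ} (q : Fin k → ℕ) {i j : ℕ} (h : i ≤ j) : offN q i ≤ offN q j :=
  Finset.sum_le_sum_of_subset (Finset.range_subset_range.mpr h)

theorem offN_succ {k : ℕ} (q : Fin k → ℕ) (i : ℕ) : offN q (i + 1) = offN q i + Qn q i :=
  Finset.sum_range_succ _ _

theorem offN_k {k p : ℕ} {q : Fin k → ℕ} (hq : IsOrderedPartition p q) : offN q k = p := by
  rw [offN, ← Fin.sum_univ_eq_sum_range (Qn q) k, ← hq.2]
  apply Finset.sum_congr rfl
  intro j _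
  simp [Qn]

theorem offN_add_le {k p : ℕ} {q : Fin k → ℕ} (hq : IsOrderedPartition p q) {i : ℕ}
    (hi : i < k) : offN q i + Qn q i ≤ p := by
  rw [← offN_succ]
  calc offN q (i+1) ≤ offN q k := offN_mono q hi
  _ = p := offN_k hq

def blkN {k : ℕ} (q : Fin k → ℕ) (hk : 0 < k) (r : ℕ) : ℕ :=
  ((Finset.range k).filter (fun i => offN q i ≤ r)).max'
    ⟨0, by rw [Finset.mem_filter, Finset.mem_range]; exact ⟨hk, by simp [offN]⟩⟩

theorem blk_spec {k p : ℕ} {q : Fin k → ℕ} (hq : IsOrderedPartition p q) (hk : 0 < k)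
    {r : ℕ} (hr : r < p) :
    blkN q hk r < k ∧ offN q (blkN q hk r) ≤ r ∧ r < offN q (blkN q hk r) + Qn q (blkN q hk r) := by
  have hmem : blkN q hk r ∈ (Finset.range k).filter (fun i => offN q i ≤ r) :=
    Finset.max'_mem _ _
  rw [Finset.mem_filter, Finset.mem_range] at hmem
  refine ⟨hmem.1, hmem.2, ?_⟩
  by_contra hcon
  push_neg at hcon
  set b := blkN q hk r with hb
  have h1 : offN q (b + 1) ≤ r := by rw [offN_succ]; exact hcon
  have h2 : b + 1 < k := by
    by_contra h3
    have : b + 1 = k := by omega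
    rw [this, offN_k hq] at h1
    omega
  have hle : b + 1 ≤ b := Finset.le_max' _ _ (by rw [Finset.mem_filter, Finset.mem_range]; exact ⟨h2, h1⟩)
  omega

theorem blk_eq {k p : ℕ} {q : Fin k → ℕ} (hq : IsOrderedPartition p q) (hk : 0 < k)
    {r i : ℕ} (hik : i < k) (h1 : offN q i ≤ r) (h2 : r < offN q i + Qn q i) :
    blkN q hk r = i := by
  have hr : r < p := lt_of_lt_of_le h2 (offN_add_le hq hik)
  obtain ⟨hbk, hb1, hb2⟩ := blk_spec hq hk hr
  set b := blkN q hk r with hb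
  rcases lt_trichotomy b i with h | h | h
  · have : offN q (b+1) ≤ offN q i := offN_mono q (by omega)
    rw [offN_succ] at this
    omega
  · exact h
  · have : offN q (i+1) ≤ offN q b := offN_mono q (by omega)
    rw [offN_succ] at this
    omega

end SAux

namespace SAux

abbrev qrev {k : ℕ} (q : Fin k → ℕ) : Fin k → ℕ := permutePart Fin.revPerm q

theorem qrev_apply {k : ℕ} (q : Fin k → ℕ) (j : Fin k) : qrev q j = q j.rev := by
  simp [qrev, permutePart, Fin.revPerm_symm]

theorem hq_qrev {k p : ℕ} {q : Fin k → ℕ} (hq : IsOrderedPartition p q) :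
    IsOrderedPartition p (qrev q) := by
  constructor
  · intro j; rw [qrev_apply]; exact hq.1 _
  · rw [← hq.2]
    have : ∀ j : Fin k, qrev q j = q (Fin.revPerm j) := by
      intro j; rw [qrev_apply, Fin.revPerm_apply]
    calc (∑ j, qrev q j) = ∑ j, q (Fin.revPerm j) := Finset.sum_congr rfl (fun j _ => this j)
    _ = ∑ j, q j := Equiv.sum_comp Fin.revPerm q

theorem qrev_qrev {k : ℕ} (q : Fin k → ℕ) : qrev (qrev q) = q := by
  funext j
  rw [qrev_apply, qrev_apply, Fin.rev_rev]

theorem Qn_qrev {k : ℕ} (q : Fin k → ℕ) {i : ℕ} (hik : i < k) :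
    Qn (qrev q) (k - 1 - i) = Qn q i := by
  have h1 : k - 1 - i < k := by omega
  rw [Qn, Qn, dif_pos h1, dif_pos hik, qrev_apply]
  congr 1
  ext
  rw [Fin.val_rev]
  simp only []
  omega

-- the reversal map on indices
def tN {k : ℕ} (q : Fin k → ℕ) (hk : 0 < k) (r : ℕ) : ℕ :=
  offN (qrev q) (k - 1 - blkN q hk r) + (r - offN q (blkN q hk r))

theorem tN_lt {k p : ℕ} {q : Fin k → ℕ} (hq : IsOrderedPartition p q) (hk : 0 < k)
    {r : ℕ} (hr : r < p) : tN q hk r < p := by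
  obtain ⟨h1, h2, h3⟩ := blk_spec hq hk hr
  have hb : k - 1 - blkN q hk r < k := by omega
  have := offN_add_le (hq_qrev hq) hb
  rw [Qn_qrev q h1] at this
  rw [tN]
  omega

theorem blk_tN {k p : ℕ} {q : Fin k → ℕ} (hq : IsOrderedPartition p q) (hk : 0 < k)
    {r : ℕ} (hr : r < p) :
    blkN (qrev q) hk (tN q hk r) = k - 1 - blkN q hk r := by
  obtain ⟨h1, h2, h3⟩ := blk_spec hq hk hr
  apply blk_eq (hq_qrev hq) hk (by omega)
  · rw [tN]; omega
  · rw [tN, Qn_qrev q h1]; omega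

theorem tN_tN {k p : ℕ} {q : Fin k → ℕ} (hq : IsOrderedPartition p q) (hk : 0 < k)
    {r : ℕ} (hr : r < p) : tN (qrev q) hk (tN q hk r) = r := by
  obtain ⟨h1, h2, h3⟩ := blk_spec hq hk hr
  rw [tN, blk_tN hq hk hr, qrev_qrev]
  have hii : k - 1 - (k - 1 - blkN q hk r) = blkN q hk r := by omega
  rw [hii, tN]
  omega

def tFin {k p : ℕ} (q : Fin k → ℕ) (hq : IsOrderedPartition p q) (hk : 0 < k)
    (r : Fin p) : Fin p := ⟨tN q hk r, tN_lt hq hk r.2⟩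

def tEquiv {k p : ℕ} (q : Fin k → ℕ) (hq : IsOrderedPartition p q) (hk : 0 < k) :
    Equiv.Perm (Fin p) where
  toFun := tFin q hq hk
  invFun := tFin (qrev q) (hq_qrev hq) hk
  left_inv := by
    intro r
    apply Fin.ext
    exact tN_tN hq hk r.2
  right_inv := by
    intro r
    apply Fin.ext
    have := tN_tN (hq_qrev hq) hk (p := p) (r := (r : ℕ)) r.2
    rw [qrev_qrev] at this
    exact this

end SAux

namespace SAux

theorem blockEntry_eq {n p k : ℕ} (q : Fin k → ℕ) (A : MatT n p) (m : Fin n)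
    (i j : Fin k) (a b : ℕ) (ha : off q i + a < p) (hb : off q j + b < p) :
    blockEntry q A m i j a b = A m ⟨off q i + a, ha⟩ ⟨off q j + b, hb⟩ := dif_pos ⟨ha, hb⟩

theorem vpi_entry {n p k : ℕ} {q : Fin k → ℕ} (hq : IsOrderedPartition p q) (hk : 0 < k)
    {A : MatT n p} (hA : A ∈ VPi n p q) (m : Fin n) {r s : Fin p}
    (hlt : blkN q hk (s : ℕ) < blkN q hk (r : ℕ)) : A m r s = 0 := by
  obtain ⟨hr1, hr2, hr3⟩ := blk_spec hq hk r.2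
  obtain ⟨hs1, hs2, hs3⟩ := blk_spec hq hk s.2
  have hoffr : off q ⟨blkN q hk (r : ℕ), hr1⟩ = offN q (blkN q hk (r : ℕ)) := off_eq_offN q _
  have hoffs : off q ⟨blkN q hk (s : ℕ), hs1⟩ = offN q (blkN q hk (s : ℕ)) := off_eq_offN q _
  have hQr : q ⟨blkN q hk (r : ℕ), hr1⟩ = Qn q (blkN q hk (r : ℕ)) := by rw [Qn, dif_pos hr1]
  have hQs : q ⟨blkN q hk (s : ℕ), hs1⟩ = Qn q (blkN q hk (s : ℕ)) := by rw [Qn, dif_pos hs1]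
  have hpr : off q ⟨blkN q hk (r : ℕ), hr1⟩ + ((r : ℕ) - offN q (blkN q hk (r : ℕ))) < p := by
    rw [hoffr]; omega
  have hps : off q ⟨blkN q hk (s : ℕ), hs1⟩ + ((s : ℕ) - offN q (blkN q hk (s : ℕ))) < p := by
    rw [hoffs]; omega
  have key := hA m ⟨blkN q hk (r : ℕ), hr1⟩ ⟨blkN q hk (s : ℕ), hs1⟩ hlt
    ((r : ℕ) - offN q (blkN q hk (r : ℕ))) ((s : ℕ) - offN q (blkN q hk (s : ℕ)))
    (by rw [hQr]; omega) (by rw [hQs]; omega)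
  rw [blockEntry_eq q A m _ _ _ _ hpr hps] at key
  have er : (⟨off q ⟨blkN q hk (r : ℕ), hr1⟩ + ((r : ℕ) - offN q (blkN q hk (r : ℕ))), hpr⟩ : Fin p) = r := by
    apply Fin.ext
    show off q ⟨blkN q hk (r : ℕ), hr1⟩ + ((r : ℕ) - offN q (blkN q hk (r : ℕ))) = (r : ℕ)
    rw [hoffr]; omega
  have es : (⟨off q ⟨blkN q hk (s : ℕ), hs1⟩ + ((s : ℕ) - offN q (blkN q hk (s : ℕ))), hps⟩ : Fin p) = s := by
    apply Fin.ext
    show off q ⟨blkN q hk (s : ℕ), hs1⟩ + ((s : ℕ) - offN q (blkN q hk (s : ℕ))) = (s : ℕ)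
    rw [hoffs]; omega
  rw [er, es] at key
  exact key

theorem cset_diag {n p k : ℕ} {q : Fin k → ℕ} (hq : IsOrderedPartition p q) (hk : 0 < k)
    {A A' : MatT n p} (hC : (A, A') ∈ CSet n p q Fin.revPerm) (m : Fin n) {r s : Fin p}
    (heq : blkN q hk (r : ℕ) = blkN q hk (s : ℕ)) :
    A m r s = A' m (tFin q hq hk r) (tFin q hq hk s) := by
  obtain ⟨hr1, hr2, hr3⟩ := blk_spec hq hk r.2
  obtain ⟨hs1, hs2, hs3⟩ := blk_spec hq hk s.2
  rw [← heq] at hs1 hs2 hs3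
  set i := blkN q hk (r : ℕ) with hi
  have hoff : off q ⟨i, hr1⟩ = offN q i := off_eq_offN q _
  have hQ : q ⟨i, hr1⟩ = Qn q i := by rw [Qn, dif_pos hr1]
  have hrev : off (permutePart Fin.revPerm q) (Fin.revPerm ⟨i, hr1⟩) = offN (qrev q) (k - 1 - i) := by
    rw [show (Fin.revPerm ⟨i, hr1⟩ : Fin k) = (⟨i, hr1⟩ : Fin k).rev from Fin.revPerm_apply _]
    rw [show off (permutePart Fin.revPerm q) = off (qrev q) from rfl]
    rw [off_eq_offN]
    congr 1
    rw [Fin.val_rev]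
    show k - (i + 1) = k - 1 - i
    omega
  have hbound : offN (qrev q) (k - 1 - i) + Qn (qrev q) (k - 1 - i) ≤ p :=
    offN_add_le (hq_qrev hq) (by omega)
  rw [Qn_qrev q hr1] at hbound
  have hpr : off q ⟨i, hr1⟩ + ((r : ℕ) - offN q i) < p := by rw [hoff]; omega
  have hps : off q ⟨i, hr1⟩ + ((s : ℕ) - offN q i) < p := by rw [hoff]; omega
  have hpr' : off (permutePart Fin.revPerm q) (Fin.revPerm ⟨i, hr1⟩) + ((r : ℕ) - offN q i) < p := by
    rw [hrev]; omega
  have hps' : off (permutePart Fin.revPerm q) (Fin.revPerm ⟨i, hr1⟩) + ((s : ℕ) - offN q i) < p := by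
    rw [hrev]; omega
  have key := hC.2.2 m ⟨i, hr1⟩ ((r : ℕ) - offN q i) ((s : ℕ) - offN q i)
    (by rw [hQ]; omega) (by rw [hQ]; omega)
  rw [blockEntry_eq q A m _ _ _ _ hpr hps,
    blockEntry_eq (permutePart Fin.revPerm q) A' m _ _ _ _ hpr' hps'] at key
  have er : (⟨off q ⟨i, hr1⟩ + ((r : ℕ) - offN q i), hpr⟩ : Fin p) = r := by
    apply Fin.ext
    show off q ⟨i, hr1⟩ + ((r : ℕ) - offN q i) = (r : ℕ)
    rw [hoff]; omega
  have es : (⟨off q ⟨i, hr1⟩ + ((s : ℕ) - offN q i), hps⟩ : Fin p) = s := by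
    apply Fin.ext
    show off q ⟨i, hr1⟩ + ((s : ℕ) - offN q i) = (s : ℕ)
    rw [hoff]; omega
  have er' : (⟨off (permutePart Fin.revPerm q) (Fin.revPerm ⟨i, hr1⟩) + ((r : ℕ) - offN q i), hpr'⟩ : Fin p)
      = tFin q hq hk r := by
    apply Fin.ext
    show off (permutePart Fin.revPerm q) (Fin.revPerm ⟨i, hr1⟩) + ((r : ℕ) - offN q i) = tN q hk (r : ℕ)
    rw [hrev, tN, ← hi]
  have es' : (⟨off (permutePart Fin.revPerm q) (Fin.revPerm ⟨i, hr1⟩) + ((s : ℕ) - offN q i), hps'⟩ : Fin p)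
      = tFin q hq hk s := by
    apply Fin.ext
    show off (permutePart Fin.revPerm q) (Fin.revPerm ⟨i, hr1⟩) + ((s : ℕ) - offN q i) = tN q hk (s : ℕ)
    rw [hrev, tN, ← heq]
  rw [er, es, er', es'] at key
  exact key

end SAux

namespace SAux

theorem gconj_mul {n p : ℕ} (g h : Matrix.GeneralLinearGroup (Fin p) ℂ) (A : MatT n p) :
    gconj (g * h) A = gconj g (gconj h A) := by
  funext m
  simp [gconj, _root_.mul_inv_rev, Matrix.mul_assoc]

theorem gconj_cancel {n p : ℕ} (g : Matrix.GeneralLinearGroup (Fin p) ℂ) (A : MatT n p) :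
    gconj g⁻¹ (gconj g A) = A := by
  rw [← gconj_mul]
  funext m
  simp [gconj]

theorem pow_cancel1 {t : ℂ} (ht : t ≠ 0) {i j : ℕ} (hj : j ≤ i) (c : ℂ) :
    t⁻¹ ^ i * (t ^ (i - j) * c) * t ^ j = c := by
  have h1 : t⁻¹ ^ i * (t ^ (i - j) * c) * t ^ j = t⁻¹ ^ i * (t ^ (i - j) * t ^ j) * c := by ring
  rw [h1, ← pow_add, Nat.sub_add_cancel hj, inv_pow, inv_mul_cancel₀ (pow_ne_zero _ ht), one_mul]

theorem pow_cancel2 {t : ℂ} (ht : t ≠ 0) {i j : ℕ} (hij : i ≤ j) (c : ℂ) :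
    t⁻¹ ^ i * c * t ^ j = t ^ (j - i) * c := by
  have h0 : t ^ j = t ^ i * t ^ (j - i) := by rw [← pow_add]; congr 1; omega
  rw [h0]
  have h1 : t⁻¹ ^ i * c * (t ^ i * t ^ (j - i)) = t⁻¹ ^ i * t ^ i * (t ^ (j - i) * c) := by ring
  rw [h1, inv_pow, inv_mul_cancel₀ (pow_ne_zero _ ht), one_mul]

variable {n p k : ℕ} (q : Fin k → ℕ) (hq : IsOrderedPartition p q) (hk : 0 < k)

/-- polynomial entries of the first curve component (before conjugation by `g`) -/
noncomputable def XP (A A' : MatT n p) (m : Fin n) : Matrix (Fin p) (Fin p) (Polynomial ℂ) :=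
  Matrix.of fun r s =>
    if blkN q hk (s : ℕ) < blkN q hk (r : ℕ) then
      Polynomial.X ^ (blkN q hk (r : ℕ) - blkN q hk (s : ℕ)) *
        Polynomial.C (A' m (tFin q hq hk r) (tFin q hq hk s))
    else Polynomial.C (A m r s)

/-- polynomial entries of the second curve component (before conjugation by `g'`) -/
noncomputable def YP (A A' : MatT n p) (m : Fin n) : Matrix (Fin p) (Fin p) (Polynomial ℂ) :=
  Matrix.of fun u v =>
    if blkN q hk (((tEquiv q hq hk).symm v : Fin p) : ℕ) <
        blkN q hk (((tEquiv q hq hk).symm u : Fin p) : ℕ) then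
      Polynomial.C (A' m u v)
    else
      Polynomial.X ^ (blkN q hk (((tEquiv q hq hk).symm v : Fin p) : ℕ) -
          blkN q hk (((tEquiv q hq hk).symm u : Fin p) : ℕ)) *
        Polynomial.C (A m ((tEquiv q hq hk).symm u) ((tEquiv q hq hk).symm v))

noncomputable def Xc (A A' : MatT n p) (t : ℂ) : MatT n p :=
  fun m => (XP q hq hk A A' m).map (Polynomial.eval t)

noncomputable def Yc (A A' : MatT n p) (t : ℂ) : MatT n p :=
  fun m => (YP q hq hk A A' m).map (Polynomial.eval t)

theorem Xc_zero {A A' : MatT n p} (hA : A ∈ VPi n p q) : Xc q hq hk A A' 0 = A := by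
  funext m
  ext r s
  simp only [Xc, XP, Matrix.map_apply, Matrix.of_apply]
  split_ifs with h
  · rw [Polynomial.eval_mul, Polynomial.eval_pow, Polynomial.eval_X, Polynomial.eval_C,
      zero_pow (by omega : blkN q hk (r : ℕ) - blkN q hk (s : ℕ) ≠ 0), zero_mul,
      vpi_entry hq hk hA m h]
  · rw [Polynomial.eval_C]

theorem Yc_zero {A A' : MatT n p} (hC : (A, A') ∈ CSet n p q Fin.revPerm) :
    Yc q hq hk A A' 0 = A' := by
  funext m
  ext u v
  simp only [Yc, YP, Matrix.map_apply, Matrix.of_apply]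
  set r := (tEquiv q hq hk).symm u with hr
  set s := (tEquiv q hq hk).symm v with hs
  have hu : tFin q hq hk r = u := (tEquiv q hq hk).apply_symm_apply u
  have hv : tFin q hq hk s = v := (tEquiv q hq hk).apply_symm_apply v
  have hub : (u : ℕ) = tN q hk (r : ℕ) := by rw [← hu]; rfl
  have hvb : (v : ℕ) = tN q hk (s : ℕ) := by rw [← hv]; rfl
  split_ifs with h
  · rw [Polynomial.eval_C]
  · push_neg at h
    rcases Nat.lt_or_ge (blkN q hk (r : ℕ)) (blkN q hk (s : ℕ)) with hlt | hge
    · rw [Polynomial.eval_mul, Polynomial.eval_pow, Polynomial.eval_X, Polynomial.eval_C,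
        zero_pow (by omega : blkN q hk (s : ℕ) - blkN q hk (r : ℕ) ≠ 0), zero_mul]
      have hA' : A' ∈ VPi n p (qrev q) := hC.2.1
      refine (vpi_entry (hq_qrev hq) hk hA' m ?_).symm
      rw [hub, hvb, blk_tN hq hk r.2, blk_tN hq hk s.2]
      have h1 := (blk_spec hq hk r.2).1
      have h2 := (blk_spec hq hk s.2).1
      omega
    · have heq : blkN q hk (r : ℕ) = blkN q hk (s : ℕ) := by omega
      rw [Polynomial.eval_mul, Polynomial.eval_pow, Polynomial.eval_X, Polynomial.eval_C]
      rw [show blkN q hk (s : ℕ) - blkN q hk (r : ℕ) = 0 by omega]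
      rw [pow_zero, one_mul, cset_diag hq hk hC m heq, hu, hv]


theorem tFin_symm_apply (u : Fin p) : tFin q hq hk ((tEquiv q hq hk).symm u) = u :=
  (tEquiv q hq hk).apply_symm_apply u

theorem symm_tFin (a : Fin p) : (tEquiv q hq hk).symm (tFin q hq hk a) = a :=
  (tEquiv q hq hk).symm_apply_apply a

/-- the conjugating matrix for the torus-times-reversal degeneration -/
noncomputable def Gmat (t : ℂ) : Matrix (Fin p) (Fin p) ℂ :=
  Matrix.of fun u v => if u = tFin q hq hk v then t⁻¹ ^ blkN q hk (v : ℕ) else 0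

noncomputable def Gmatinv (t : ℂ) : Matrix (Fin p) (Fin p) ℂ :=
  Matrix.of fun u v => if v = tFin q hq hk u then t ^ blkN q hk (u : ℕ) else 0

theorem Gmat_mul {t : ℂ} (ht : t ≠ 0) : Gmat q hq hk t * Gmatinv q hq hk t = 1 := by
  ext u w
  rw [Matrix.mul_apply]
  rw [Finset.sum_eq_single ((tEquiv q hq hk).symm u)]
  · simp only [Gmat, Gmatinv, Matrix.of_apply]
    rw [if_pos (tFin_symm_apply q hq hk u).symm]
    have hfix : tFin q hq hk ((tEquiv q hq hk).symm u) = u := tFin_symm_apply q hq hk u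
    by_cases hw : w = u
    · subst hw
      rw [if_pos hfix.symm, inv_pow, inv_mul_cancel₀ (pow_ne_zero _ ht), Matrix.one_apply_eq]
    · rw [if_neg (fun hcon => hw (hcon.trans hfix)), mul_zero,
        Matrix.one_apply_ne (fun hcon : u = w => hw hcon.symm)]
  · intro v _ hv
    have : u ≠ tFin q hq hk v := by
      intro hcon
      apply hv
      rw [hcon]
      exact (symm_tFin q hq hk v).symm
    simp only [Gmat, Matrix.of_apply, if_neg this, zero_mul]
  · intro hcon
    exact absurd (Finset.mem_univ _) hcon

theorem Gmatinv_mul {t : ℂ} (ht : t ≠ 0) : Gmatinv q hq hk t * Gmat q hq hk t = 1 := by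
  ext u w
  rw [Matrix.mul_apply]
  rw [Finset.sum_eq_single (tFin q hq hk u)]
  · simp only [Gmat, Gmatinv, Matrix.of_apply, eq_self_iff_true, if_true]
    by_cases hw : w = u
    · subst hw
      simp only [eq_self_iff_true, if_true]
      rw [inv_pow, mul_inv_cancel₀ (pow_ne_zero _ ht), Matrix.one_apply_eq]
    · have hne : tFin q hq hk u ≠ tFin q hq hk w := by
        intro hcon
        exact hw ((tEquiv q hq hk).injective hcon.symm)
      rw [if_neg hne, mul_zero, Matrix.one_apply_ne (fun hcon : u = w => hw hcon.symm)]
  · intro v _ hv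
    simp only [Gmatinv, Matrix.of_apply, if_neg hv, zero_mul]
  · intro hcon
    exact absurd (Finset.mem_univ _) hcon

noncomputable def gt {t : ℂ} (ht : t ≠ 0) : Matrix.GeneralLinearGroup (Fin p) ℂ :=
  ⟨Gmat q hq hk t, Gmatinv q hq hk t, Gmat_mul q hq hk ht, Gmatinv_mul q hq hk ht⟩

theorem Yc_eq_gconj {A A' : MatT n p} {t : ℂ} (ht : t ≠ 0) :
    Yc q hq hk A A' t = gconj (gt q hq hk ht) (Xc q hq hk A A' t) := by
  funext m
  ext u v
  have hrw : gconj (gt q hq hk ht) (Xc q hq hk A A' t) m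
      = Gmat q hq hk t * Xc q hq hk A A' t m * Gmatinv q hq hk t := rfl
  rw [hrw]
  rw [Matrix.mul_apply]
  rw [Finset.sum_eq_single ((tEquiv q hq hk).symm v)]
  · rw [Matrix.mul_apply, Finset.sum_eq_single ((tEquiv q hq hk).symm u)]
    · simp only [Gmat, Gmatinv, Matrix.of_apply]
      rw [if_pos (tFin_symm_apply q hq hk u).symm,
        if_pos (tFin_symm_apply q hq hk v).symm]
      simp only [Yc, Xc, XP, YP, Matrix.map_apply, Matrix.of_apply,
        tFin_symm_apply, Polynomial.eval_mul, Polynomial.eval_pow, Polynomial.eval_X,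
        Polynomial.eval_C]
      set i := blkN q hk (((tEquiv q hq hk).symm u : Fin p) : ℕ) with hi
      set j := blkN q hk (((tEquiv q hq hk).symm v : Fin p) : ℕ) with hj
      split_ifs with h
      · simp only [Polynomial.eval_mul, Polynomial.eval_pow, Polynomial.eval_X,
          Polynomial.eval_C]
        exact (pow_cancel1 ht (le_of_lt h) _).symm
      · simp only [Polynomial.eval_mul, Polynomial.eval_pow, Polynomial.eval_X,
          Polynomial.eval_C]
        exact (pow_cancel2 ht (not_lt.mp h) _).symm
    · intro a _ ha
      have : u ≠ tFin q hq hk a := by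
        intro hcon
        apply ha
        rw [hcon]
        exact (symm_tFin q hq hk a).symm
      simp only [Gmat, Matrix.of_apply, if_neg this, zero_mul]
    · intro hcon
      exact absurd (Finset.mem_univ _) hcon
  · intro b _ hb
    have : v ≠ tFin q hq hk b := by
      intro hcon
      apply hb
      rw [hcon]
      exact (symm_tFin q hq hk b).symm
    simp only [Gmatinv, Matrix.of_apply, if_neg this, mul_zero]
  · intro hcon
    exact absurd (Finset.mem_univ _) hcon

end SAux

namespace SAux

theorem mem_zclosure_of_poly {ι : Type} {T : Set (ι → ℂ)} {x : ι → ℂ}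
    (h : ∀ P : MvPolynomial ι ℂ, (∀ z ∈ T, eval z P = 0) → eval x P = 0) :
    x ∈ @closure _ (zariskiOn ι) T := by
  letI : TopologicalSpace (ι → ℂ) := zariskiOn ι
  rw [mem_closure_iff]
  intro U hU hxU
  have basis := TopologicalSpace.isTopologicalBasis_of_subbasis
    (t := zariskiOn ι) (s := {U | ∃ P : MvPolynomial ι ℂ, U = {x | eval x P ≠ 0}}) rfl
  obtain ⟨b, hb, hxb, hbU⟩ := basis.exists_subset_of_mem_open hxU hU
  obtain ⟨f, ⟨hfin, hsub⟩, rfl⟩ := hb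
  have hch : ∀ s : Set (ι → ℂ), ∃ P : MvPolynomial ι ℂ, s ∈ f → s = {x | eval x P ≠ 0} := by
    intro s
    by_cases hs : s ∈ f
    · obtain ⟨P, hP⟩ := hsub hs; exact ⟨P, fun _ => hP⟩
    · exact ⟨1, fun h' => absurd h' hs⟩
  choose Pf hPf using hch
  have hmem : ∀ z : ι → ℂ, z ∈ ⋂₀ f ↔ eval z (∏ s ∈ hfin.toFinset, Pf s) ≠ 0 := by
    intro z
    rw [map_prod, Finset.prod_ne_zero_iff]
    constructor
    · intro hz s hs
      rw [Set.Finite.mem_toFinset] at hs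
      have h2 := hz s hs
      rw [hPf s hs] at h2
      exact h2
    · intro hz s hs
      rw [hPf s hs]
      exact hz s (hfin.mem_toFinset.mpr hs)
  by_contra hne
  rw [Set.not_nonempty_iff_eq_empty] at hne
  have hvan : ∀ z ∈ T, eval z (∏ s ∈ hfin.toFinset, Pf s) = 0 := by
    intro z hz
    by_contra h0
    have : z ∈ ⋂₀ f := (hmem z).mpr h0
    exact Set.eq_empty_iff_forall_notMem.mp hne z ⟨hbU this, hz⟩
  exact ((hmem x).mp hxb) (h _ hvan)

theorem eval_aeval_poly {ι : Type} (F : ι → Polynomial ℂ) (P : MvPolynomial ι ℂ) (t : ℂ) :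
    Polynomial.eval t (MvPolynomial.aeval F P) = eval (fun i => Polynomial.eval t (F i)) P := by
  induction P using MvPolynomial.induction_on with
  | C a => simp
  | add p q hp hq => simp [hp, hq]
  | mul_X p i hp => simp [hp]

theorem mem_zClosureVV {n p : ℕ} {S : Set (MatT n p × MatT n p)} {x : MatT n p × MatT n p}
    (h : ∀ P : MvPolynomial (Idx n p ⊕ Idx n p) ℂ,
      (∀ y ∈ S, eval (coordsVV y) P = 0) → eval (coordsVV x) P = 0) :
    x ∈ zClosureVV S := by
  show x ∈ @closure _ (topVV n p) S
  exact (@closure_induced _ _ (zariskiOn (Idx n p ⊕ Idx n p)) coordsVV x S).mpr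
    (mem_zclosure_of_poly (fun P hP => h P (fun y hy => hP _ ⟨y, hy, rfl⟩)))

theorem curve_mem {n p : ℕ} {S : Set (MatT n p × MatT n p)}
    (c : ℂ → MatT n p × MatT n p) (F : Idx n p ⊕ Idx n p → Polynomial ℂ)
    (hF : ∀ t i, coordsVV (c t) i = Polynomial.eval t (F i))
    (hc : ∀ t, t ≠ 0 → c t ∈ S) : c 0 ∈ zClosureVV S := by
  apply mem_zClosureVV
  intro P hP
  have hpoly : MvPolynomial.aeval F P = 0 := by
    apply Polynomial.eq_zero_of_infinite_isRoot
    refine Set.Infinite.mono ?_ ((Set.finite_singleton (0 : ℂ)).infinite_compl)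
    intro t ht
    simp only [Set.mem_compl_iff, Set.mem_singleton_iff] at ht
    show Polynomial.IsRoot _ t
    have h1 : (fun i => Polynomial.eval t (F i)) = coordsVV (c t) :=
      funext fun i => (hF t i).symm
    rw [Polynomial.IsRoot, eval_aeval_poly, h1]
    exact hP _ (hc t ht)
  have h0 := eval_aeval_poly F P 0
  rw [hpoly, Polynomial.eval_zero] at h0
  have h1 : (fun i => Polynomial.eval 0 (F i)) = coordsVV (c 0) :=
    funext fun i => (hF 0 i).symm
  rw [h1] at h0
  exact h0.symm

theorem mapC_eval {p : ℕ} (M : Matrix (Fin p) (Fin p) ℂ) (t : ℂ) :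
    (M.map Polynomial.C).map (Polynomial.eval t) = M := by
  rw [Matrix.map_map]
  ext i j
  simp [Function.comp]

theorem conj_poly {p : ℕ} (M N : Matrix (Fin p) (Fin p) ℂ)
    (Z : Matrix (Fin p) (Fin p) (Polynomial ℂ)) (t : ℂ) :
    (M.map Polynomial.C * Z * N.map Polynomial.C).map (Polynomial.eval t)
      = M * Z.map (Polynomial.eval t) * N := by
  rw [← Polynomial.coe_evalRingHom, Matrix.map_mul, Matrix.map_mul, Polynomial.coe_evalRingHom,
    mapC_eval, mapC_eval]

theorem key {n p k : ℕ} {q : Fin k → ℕ} (hq : IsOrderedPartition p q) (hk : 0 < k)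
    (g g' : Matrix.GeneralLinearGroup (Fin p) ℂ) {A A' : MatT n p}
    (hC : (A, A') ∈ CSet n p q Fin.revPerm) :
    (gconj g A, gconj g' A') ∈ zClosureVV (graphG n p) := by
  have hzero : (fun t => (gconj g (Xc q hq hk A A' t), gconj g' (Yc q hq hk A A' t))) 0
      = (gconj g A, gconj g' A') := by
    show (gconj g (Xc q hq hk A A' 0), gconj g' (Yc q hq hk A A' 0)) = _
    rw [Xc_zero q hq hk hC.1, Yc_zero q hq hk hC]
  rw [← hzero]
  refine curve_mem (fun t => (gconj g (Xc q hq hk A A' t), gconj g' (Yc q hq hk A A' t)))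
    (Sum.elim
    (fun x : Idx n p => ((g : Matrix (Fin p) (Fin p) ℂ).map Polynomial.C * XP q hq hk A A' x.1 *
      ((g⁻¹ : Matrix.GeneralLinearGroup (Fin p) ℂ) : Matrix (Fin p) (Fin p) ℂ).map Polynomial.C)
      x.2.1 x.2.2)
    (fun x : Idx n p => ((g' : Matrix (Fin p) (Fin p) ℂ).map Polynomial.C * YP q hq hk A A' x.1 *
      ((g'⁻¹ : Matrix.GeneralLinearGroup (Fin p) ℂ) : Matrix (Fin p) (Fin p) ℂ).map Polynomial.C)
      x.2.1 x.2.2)) ?_ ?_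
  · intro t i
    rcases i with x | x
    · show gconj g (Xc q hq hk A A' t) x.1 x.2.1 x.2.2 = _
      rw [Sum.elim_inl]
      have hmat := conj_poly (g : Matrix (Fin p) (Fin p) ℂ)
        ((g⁻¹ : Matrix.GeneralLinearGroup (Fin p) ℂ) : Matrix (Fin p) (Fin p) ℂ)
        (XP q hq hk A A' x.1) t
      have hent := Matrix.ext_iff.mpr hmat x.2.1 x.2.2
      rw [Matrix.map_apply] at hent
      exact hent.symm
    · show gconj g' (Yc q hq hk A A' t) x.1 x.2.1 x.2.2 = _
      rw [Sum.elim_inr]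
      have hmat := conj_poly (g' : Matrix (Fin p) (Fin p) ℂ)
        ((g'⁻¹ : Matrix.GeneralLinearGroup (Fin p) ℂ) : Matrix (Fin p) (Fin p) ℂ)
        (YP q hq hk A A' x.1) t
      have hent := Matrix.ext_iff.mpr hmat x.2.1 x.2.2
      rw [Matrix.map_apply] at hent
      exact hent.symm
  · intro t ht
    refine ⟨gconj g (Xc q hq hk A A' t), g' * gt q hq hk ht * g⁻¹, ?_⟩
    have h2 : gconj (g' * gt q hq hk ht * g⁻¹) (gconj g (Xc q hq hk A A' t))
        = gconj g' (Yc q hq hk A A' t) := by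
      rw [gconj_mul, gconj_mul, gconj_cancel, ← Yc_eq_gconj]
    rw [h2]

end SAux


theorem stmt11 (n p : ℕ) (hn : 2 ≤ n) (hp : 2 ≤ p) (k : ℕ) (q : Fin k → ℕ)
    (hq : IsOrderedPartition p q) :
    zClosureVV (G2Orbit (CSet n p q Fin.revPerm)) ⊆ zClosureVV (graphG n p) := by
  have hk : 0 < k := by
    rcases Nat.eq_zero_or_pos k with h0 | h0
    · exfalso
      have hs := hq.2
      subst h0
      simp at hs
      omega
    · exact h0
  have hsub : G2Orbit (CSet n p q Fin.revPerm) ⊆ zClosureVV (graphG n p) := by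
    rintro ⟨x1, x2⟩ ⟨g, g', AA, hAA, hx⟩
    rw [hx]
    exact SAux.key hq hk g g' (A := AA.1) (A' := AA.2) hAA
  exact @closure_minimal _ (topVV n p) (G2Orbit (CSet n p q Fin.revPerm))
    (zClosureVV (graphG n p)) hsub (@isClosed_closure _ (topVV n p) (graphG n p))
end

section
/- Let (p_1,p_2) ∈ Π(p,2). The Zariski closure of G²·C_{(p_1,p_2),id} is contained in the Zariski closure of the graph Γ if and only if n = 2 and p = 2. -/
open Matrix MvPolynomial

-- basis lemma
theorem zar_basis (ι : Type) :
    @TopologicalSpace.IsTopologicalBasis _ (zariskiOn ι)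
      {U | ∃ P : MvPolynomial ι ℂ, U = {x | MvPolynomial.eval x P ≠ 0}} := by
  letI := zariskiOn ι
  have key : ∀ u, TopologicalSpace.GenerateOpen
      {U | ∃ P : MvPolynomial ι ℂ, U = {x | MvPolynomial.eval x P ≠ 0}} u →
      ∀ a ∈ u, ∃ v ∈ {U | ∃ P : MvPolynomial ι ℂ, U = {x | MvPolynomial.eval x P ≠ 0}},
        a ∈ v ∧ v ⊆ u := by
    intro u hu
    induction hu with
    | basic U hU => exact fun a hau => ⟨U, hU, hau, le_refl _⟩
    | univ => exact fun a _ => ⟨Set.univ, ⟨1, by simp⟩, trivial, le_refl _⟩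
    | inter U V hU hV ihU ihV =>
      intro a hau
      obtain ⟨u1, ⟨P, rfl⟩, ha1, hsub1⟩ := ihU a hau.1
      obtain ⟨u2, ⟨Q, rfl⟩, ha2, hsub2⟩ := ihV a hau.2
      refine ⟨{x | MvPolynomial.eval x (P * Q) ≠ 0}, ⟨P * Q, rfl⟩, ?_, ?_⟩
      · simpa using mul_ne_zero ha1 ha2
      · intro x hx
        rw [Set.mem_setOf_eq, _root_.map_mul] at hx
        exact ⟨hsub1 (left_ne_zero_of_mul hx), hsub2 (right_ne_zero_of_mul hx)⟩
    | sUnion S hS ih =>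
      rintro a ⟨t, htS, hat⟩
      obtain ⟨v, hv, hav, hsub⟩ := ih t htS a hat
      exact ⟨v, hv, hav, hsub.trans (Set.subset_sUnion_of_mem htS)⟩
  apply TopologicalSpace.isTopologicalBasis_of_isOpen_of_nhds
  · rintro u hu
    exact TopologicalSpace.isOpen_generateFrom_of_mem hu
  · intro a u hau hu
    exact key u hu a hau

theorem mem_zarClosure_iff {ι : Type} (s : Set (ι → ℂ)) (x : ι → ℂ) :
    x ∈ @closure _ (zariskiOn ι) s ↔
      ∀ P : MvPolynomial ι ℂ, (∀ y ∈ s, MvPolynomial.eval y P = 0) →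
        MvPolynomial.eval x P = 0 := by
  letI := zariskiOn ι
  rw [(zar_basis ι).mem_closure_iff]
  constructor
  · intro h P hP
    by_contra hx
    obtain ⟨y, hy1, hy2⟩ := h {x | MvPolynomial.eval x P ≠ 0} ⟨P, rfl⟩ hx
    exact hy1 (hP y hy2)
  · rintro h o ⟨P, rfl⟩ hx
    by_contra hne
    rw [Set.not_nonempty_iff_eq_empty] at hne
    refine hx (h P (fun y hy => ?_))
    by_contra hy0
    exact Set.eq_empty_iff_forall_notMem.mp hne y ⟨hy0, hy⟩

theorem mem_zClosureVV_iff {n p : ℕ} (s : Set (MatT n p × MatT n p))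
    (x : MatT n p × MatT n p) :
    x ∈ zClosureVV s ↔
      ∀ P : MvPolynomial (Idx n p ⊕ Idx n p) ℂ,
        (∀ y ∈ s, MvPolynomial.eval (coordsVV y) P = 0) →
        MvPolynomial.eval (coordsVV x) P = 0 := by
  letI : TopologicalSpace ((Idx n p ⊕ Idx n p) → ℂ) := zariskiOn (Idx n p ⊕ Idx n p)
  rw [zClosureVV, topVV, closure_induced, mem_zarClosure_iff]
  constructor
  · intro h P hP
    exact h P (by rintro y ⟨z, hz, rfl⟩; exact hP z hz)
  · intro h P hP
    exact h P (fun y hy => hP _ ⟨y, hy, rfl⟩)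

-- substitution
theorem eval_aeval' {ι κ : Type} (F : ι → MvPolynomial κ ℂ) (P : MvPolynomial ι ℂ)
    (v : κ → ℂ) :
    MvPolynomial.eval v (MvPolynomial.aeval F P) =
      MvPolynomial.eval (fun i => MvPolynomial.eval v (F i)) P := by
  induction P using MvPolynomial.induction_on with
  | C a => simp
  | add p q hp hq => simp only [map_add, hp, hq]
  | mul_X p i hp =>
    rw [_root_.map_mul, aeval_X, _root_.map_mul, hp, _root_.map_mul, eval_X]

section Sec2
open Matrix MvPolynomial
variable {n p : ℕ}

theorem gconj_gconj (g h : Matrix.GeneralLinearGroup (Fin p) ℂ) (A : MatT n p) :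
    gconj g (gconj h A) = gconj (g * h) A := by
  funext m
  simp only [gconj, _root_.mul_inv_rev, Units.val_mul, Matrix.mul_assoc]

theorem gconj_one (A : MatT n p) : gconj (1 : Matrix.GeneralLinearGroup (Fin p) ℂ) A = A := by
  funext m
  simp [gconj]

/-- generic intertwiner matrix for a slot assignment -/
noncomputable def Mgen (n p : ℕ) (s : Fin p × Fin p → Fin n × Fin p × Fin p) :
    Matrix (Fin p × Fin p) (Fin p × Fin p) (MvPolynomial (Idx n p ⊕ Idx n p) ℂ) :=
  fun rc kl =>
    (if kl.1 = (s rc).2.1 then X (Sum.inl ((s rc).1, kl.2, (s rc).2.2)) else 0) -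
    (if kl.2 = (s rc).2.2 then X (Sum.inr ((s rc).1, (s rc).2.1, kl.1)) else 0)

theorem eval_Mgen (s : Fin p × Fin p → Fin n × Fin p × Fin p)
    (x : MatT n p × MatT n p) (rc kl : Fin p × Fin p) :
    MvPolynomial.eval (coordsVV x) (Mgen n p s rc kl) =
      (if kl.1 = (s rc).2.1 then x.1 (s rc).1 kl.2 (s rc).2.2 else 0) -
      (if kl.2 = (s rc).2.2 then x.2 (s rc).1 (s rc).2.1 kl.1 else 0) := by
  rw [Mgen, map_sub]
  congr 1 <;> split <;>
    simp only [eval_X, map_zero, coordsVV, Sum.elim_inl, Sum.elim_inr, coordsV]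

theorem det_Mgen_vanish (hp : 0 < p) (s : Fin p × Fin p → Fin n × Fin p × Fin p)
    (x : MatT n p × MatT n p) (hx : x ∈ graphG n p) :
    MvPolynomial.eval (coordsVV x) ((Mgen n p s).det) = 0 := by
  obtain ⟨A, g, rfl⟩ := hx
  rw [RingHom.map_det]
  rw [← Matrix.exists_mulVec_eq_zero_iff]
  refine ⟨fun kl => (g : Matrix (Fin p) (Fin p) ℂ) kl.1 kl.2, ?_, ?_⟩
  · intro h0
    have h1 : (g : Matrix (Fin p) (Fin p) ℂ) = 0 := by
      ext i j; exact congrFun h0 (i, j)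
    have h2 : ((g⁻¹ : Matrix.GeneralLinearGroup (Fin p) ℂ) : Matrix (Fin p) (Fin p) ℂ) *
        (g : Matrix (Fin p) (Fin p) ℂ) = 1 := by
      rw [← Units.val_mul, inv_mul_cancel g]; rfl
    rw [h1, Matrix.mul_zero] at h2
    have := congrFun (congrFun h2 ⟨0, hp⟩) ⟨0, hp⟩
    simp at this
  · funext rc
    rcases hs : s rc with ⟨m, r, c⟩
    simp only [Matrix.mulVec, dotProduct, RingHom.mapMatrix_apply, Matrix.map_apply, eval_Mgen, hs, Pi.zero_apply]
    have step : ∀ kl : Fin p × Fin p,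
        ((if kl.1 = r then (A, gconj g A).1 m kl.2 c else 0) -
          (if kl.2 = c then (A, gconj g A).2 m r kl.1 else 0)) *
          (g : Matrix (Fin p) (Fin p) ℂ) kl.1 kl.2
        = (if kl.1 = r then (g : Matrix (Fin p) (Fin p) ℂ) kl.1 kl.2 * A m kl.2 c else 0)
          - (if kl.2 = c then (gconj g A) m r kl.1 * (g : Matrix (Fin p) (Fin p) ℂ) kl.1 kl.2
              else 0) := by
      intro kl; split <;> split <;> ring
    rw [Finset.sum_congr rfl (fun kl _ => step kl), Finset.sum_sub_distrib]
    rw [Fintype.sum_prod_type, Fintype.sum_prod_type]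
    have e1 : ∑ k : Fin p, ∑ l : Fin p,
        (if (k,l).1 = r then (g : Matrix (Fin p) (Fin p) ℂ) (k,l).1 (k,l).2 * A m (k,l).2 c else 0)
        = ∑ l : Fin p, (g : Matrix (Fin p) (Fin p) ℂ) r l * A m l c := by
      rw [Finset.sum_comm]
      refine Finset.sum_congr rfl (fun l _ => ?_)
      simp
    have e2 : ∑ k : Fin p, ∑ l : Fin p,
        (if (k,l).2 = c then (gconj g A) m r (k,l).1 * (g : Matrix (Fin p) (Fin p) ℂ) (k,l).1 (k,l).2 else 0)
        = ∑ k : Fin p, (gconj g A) m r k * (g : Matrix (Fin p) (Fin p) ℂ) k c := by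
      refine Finset.sum_congr rfl (fun k _ => ?_)
      simp
    rw [e1, e2, ← Matrix.mul_apply, ← Matrix.mul_apply]
    have : (gconj g A) m * (g : Matrix (Fin p) (Fin p) ℂ) = (g : Matrix (Fin p) (Fin p) ℂ) * A m := by
      rw [gconj, Matrix.mul_assoc, Matrix.mul_assoc, ← Units.val_mul, inv_mul_cancel g]
      simp
    rw [this, sub_self]
end Sec2


section Aux2
open Matrix

theorem det_ne_zero_of_tri {κ : Type} [Fintype κ] [DecidableEq κ]
    (N : Matrix κ κ ℂ) (b : κ → ℕ) (hb : Function.Injective b)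
    (htri : ∀ x y, b y < b x → N x y = 0) (hdiag : ∀ x, N x x ≠ 0) : N.det ≠ 0 := by
  letI : LinearOrder κ := LinearOrder.lift' b hb
  have hlt : ∀ x y : κ, x < y ↔ b x < b y := by
    intro x y
    rw [lt_iff_le_not_ge, lt_iff_le_not_ge]
    exact Iff.rfl
  rw [Matrix.det_of_upperTriangular (M := N) (fun i j h => htri i j ((hlt j i).mp h))]
  exact Finset.prod_ne_zero_iff.mpr (fun x _ => hdiag x)

theorem off_zero (q : Fin 2 → ℕ) : off q 0 = 0 := by
  simp [off, Fin.sum_univ_two, show ¬((0:Fin 2) < 0) by decide, show ¬((1:Fin 2) < 0) by decide]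

theorem off_one (q : Fin 2 → ℕ) : off q 1 = q 0 := by
  simp [off, Fin.sum_univ_two, show (0:Fin 2) < 1 by decide, show ¬((1:Fin 2) < 1) by decide]

theorem permutePart_one {k : ℕ} (q : Fin k → ℕ) : permutePart 1 q = q := by
  funext j; simp [permutePart]; rfl

theorem fin2_cases {i j : Fin 2} (h : j < i) : i = 1 ∧ j = 0 := by
  constructor <;> (apply Fin.ext; omega)
end Aux2

section Fwd
open Matrix MvPolynomial

variable {n p : ℕ}

/-- diag(0,1,...,p-1) -/
noncomputable def Dmat (p : ℕ) : Matrix (Fin p) (Fin p) ℂ :=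
  Matrix.of fun i j => if i = j then (i : ℂ) else 0

/-- superdiagonal ones -/
noncomputable def Jmat (p : ℕ) : Matrix (Fin p) (Fin p) ℂ :=
  Matrix.of fun i j => if (i : ℕ) + 1 = (j : ℕ) then 1 else 0

/-- modified: superdiagonal ones except at column p1, plus corner (0,p-1) -/
noncomputable def Jmat' (p p1 : ℕ) : Matrix (Fin p) (Fin p) ℂ :=
  Matrix.of fun i j =>
    if ((i : ℕ) + 1 = (j : ℕ) ∧ (i : ℕ) + 1 ≠ p1) ∨ ((i : ℕ) = 0 ∧ (j : ℕ) = p - 1)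
    then 1 else 0

theorem dmat_offdiag {i j : Fin p} (h : i ≠ j) : Dmat p i j = 0 := by
  simp [Dmat, h]

end Fwd

section Fwd3
open Matrix MvPolynomial

noncomputable def ptA (n p : ℕ) : MatT n p :=
  fun m => if (m : ℕ) = 0 then Dmat p else if (m : ℕ) = 1 then Jmat p else 0

noncomputable def ptA' (n p p1 : ℕ) : MatT n p :=
  fun m => if (m : ℕ) = 0 then Dmat p else if (m : ℕ) = 1 then Jmat' p p1 else 0

noncomputable def slot3 (n p : ℕ) (hn : 2 ≤ n) (hp : 3 ≤ p) :
    Fin p × Fin p → Fin n × Fin p × Fin p :=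
  fun ij => if ij.1 = ij.2 then
      (if h : (ij.1 : ℕ) + 1 < p then (⟨1, by omega⟩, ij.1, ⟨(ij.1 : ℕ) + 1, h⟩)
       else (⟨1, by omega⟩, ⟨0, by omega⟩, ⟨p - 1, by omega⟩))
    else (⟨0, by omega⟩, ij.1, ij.2)

def rankb (p : ℕ) : Fin p × Fin p → ℕ :=
  fun ij => if ij.1 = ij.2 then (ij.1 : ℕ) else p + (ij.1 : ℕ) * p + (ij.2 : ℕ)

theorem rankb_diag {p : ℕ} (i : Fin p) : rankb p (i, i) = (i : ℕ) := by simp [rankb]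

theorem rankb_off {p : ℕ} {i j : Fin p} (h : i ≠ j) :
    rankb p (i, j) = p + (i : ℕ) * p + (j : ℕ) := by simp [rankb, h]

theorem rankb_inj (p : ℕ) : Function.Injective (rankb p) := by
  rintro ⟨i, j⟩ ⟨k, l⟩ h
  by_cases h1 : i = j <;> by_cases h2 : k = l
  · subst h1; subst h2
    rw [rankb_diag, rankb_diag] at h
    rw [Prod.ext_iff]
    constructor <;> exact Fin.ext h
  · subst h1; rw [rankb_diag, rankb_off h2] at h
    have := i.isLt; omega
  · subst h2; rw [rankb_off h1, rankb_diag] at h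
    have := k.isLt; omega
  · rw [rankb_off h1, rankb_off h2] at h
    have hjl := j.isLt
    have hll := l.isLt
    have hj : (j : ℕ) = (l : ℕ) := by
      have e1 : ((j:ℕ) + (i:ℕ) * p) % p = (j:ℕ) % p := Nat.add_mul_mod_self_right _ _ _
      have e2 : ((l:ℕ) + (k:ℕ) * p) % p = (l:ℕ) % p := Nat.add_mul_mod_self_right _ _ _
      rw [Nat.mod_eq_of_lt hjl] at e1
      rw [Nat.mod_eq_of_lt hll] at e2
      rw [show (j:ℕ) + (i:ℕ) * p = (l:ℕ) + (k:ℕ) * p by omega, e2] at e1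
      exact e1.symm
    have hp0 : 0 < p := j.pos
    have hi : (i : ℕ) = (k : ℕ) :=
      Nat.eq_of_mul_eq_mul_right hp0 (by omega)
    rw [Prod.ext_iff]
    exact ⟨Fin.ext hi, Fin.ext hj⟩

theorem mapMgen_apply {n p : ℕ} (s : Fin p × Fin p → Fin n × Fin p × Fin p)
    (x : MatT n p × MatT n p) (rc kl : Fin p × Fin p) :
    ((MvPolynomial.eval (coordsVV x)).mapMatrix (Mgen n p s)) rc kl =
      (if kl.1 = (s rc).2.1 then x.1 (s rc).1 kl.2 (s rc).2.2 else 0) -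
      (if kl.2 = (s rc).2.2 then x.2 (s rc).1 (s rc).2.1 kl.1 else 0) := by
  simp only [RingHom.mapMatrix_apply, Matrix.map_apply, eval_Mgen]

theorem fwd_p3_det (n p : ℕ) (hn : 2 ≤ n) (hp : 3 ≤ p) (p1 : ℕ) (hp1 : 0 < p1)
    (hp1p : p1 < p) :
    ((MvPolynomial.eval (coordsVV (ptA n p, ptA' n p p1))).mapMatrix
      (Mgen n p (slot3 n p hn hp))).det ≠ 0 := by
  apply det_ne_zero_of_tri _ (rankb p) (rankb_inj p)
  · rintro ⟨i, j⟩ ⟨k, l⟩ hlt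
    rw [mapMgen_apply]
    by_cases hij : i = j
    · -- diagonal row
      subst hij
      have hkl : k = l := by
        by_contra hne
        rw [rankb_diag, rankb_off hne] at hlt
        have := i.isLt; omega
      subst hkl
      rw [rankb_diag, rankb_diag] at hlt
      have hs : slot3 n p hn hp (i, i) =
          (if h : (i : ℕ) + 1 < p then ((⟨1, by omega⟩ : Fin n), i, ⟨(i : ℕ) + 1, h⟩)
           else (⟨1, by omega⟩, ⟨0, by omega⟩, ⟨p - 1, by omega⟩)) := by
        simp [slot3]
      rw [hs]
      dsimp only
      by_cases h : (i : ℕ) + 1 < p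
      · rw [dif_pos h]
        have h1 : k ≠ i := fun e => by rw [e] at hlt; omega
        have h2 : k ≠ (⟨(i : ℕ) + 1, h⟩ : Fin p) := by
          rw [Fin.ne_iff_vne]; simp; omega
        simp [h1, h2]
      · rw [dif_neg h]
        have h2 : k ≠ (⟨p - 1, by omega⟩ : Fin p) := by
          rw [Fin.ne_iff_vne]; simp; omega
        by_cases h1 : k = (⟨0, by omega⟩ : Fin p)
        · rw [if_pos h1, if_neg h2, sub_zero]
          have : ptA n p (⟨1, by omega⟩ : Fin n) = Jmat p := by
            simp [ptA]
          rw [this, Jmat, Matrix.of_apply, if_neg]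
          have : (k : ℕ) = 0 := by rw [h1]
          simp only [this]
          omega
        · simp [h1, h2]
    · -- off-diagonal row
      have hs : slot3 n p hn hp (i, j) = ((⟨0, by omega⟩ : Fin n), i, j) := by
        simp [slot3, hij]
      rw [hs]
      dsimp only
      have hD : ptA n p (⟨0, by omega⟩ : Fin n) = Dmat p := by simp [ptA]
      have hD' : ptA' n p p1 (⟨0, by omega⟩ : Fin n) = Dmat p := by simp [ptA']
      simp only [hD, hD']
      have hne : ¬(k = i ∧ l = j) := by
        rintro ⟨rfl, rfl⟩
        rw [rankb_off hij] at hlt; omega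
      by_cases h1 : k = i
      · have h2 : l ≠ j := fun e => hne ⟨h1, e⟩
        rw [if_pos h1, if_neg h2, dmat_offdiag h2, sub_zero]
      · rw [if_neg h1]
        by_cases h2 : l = j
        · rw [if_pos h2, dmat_offdiag (fun e => h1 e.symm), zero_sub, neg_zero]
        · simp [h2]
  · rintro ⟨i, j⟩
    rw [mapMgen_apply]
    by_cases hij : i = j
    · subst hij
      have hs : slot3 n p hn hp (i, i) =
          (if h : (i : ℕ) + 1 < p then ((⟨1, by omega⟩ : Fin n), i, ⟨(i : ℕ) + 1, h⟩)
           else (⟨1, by omega⟩, ⟨0, by omega⟩, ⟨p - 1, by omega⟩)) := by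
        simp [slot3]
      rw [hs]
      dsimp only
      have hJ : ptA n p (⟨1, by omega⟩ : Fin n) = Jmat p := by simp [ptA]
      have hJ' : ptA' n p p1 (⟨1, by omega⟩ : Fin n) = Jmat' p p1 := by simp [ptA']
      by_cases h : (i : ℕ) + 1 < p
      · rw [dif_pos h]
        have h2 : i ≠ (⟨(i : ℕ) + 1, h⟩ : Fin p) := by
          rw [Fin.ne_iff_vne]; simp
        simp only [if_pos rfl, if_neg h2, sub_zero, hJ, Jmat, Matrix.of_apply]
        norm_num
      · rw [dif_neg h]
        have hip : (i : ℕ) = p - 1 := by have := i.isLt; omega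
        have h1 : i ≠ (⟨0, by omega⟩ : Fin p) := by
          rw [Fin.ne_iff_vne]; simp; omega
        have h2 : i = (⟨p - 1, by omega⟩ : Fin p) := by
          rw [Fin.ext_iff]; simpa using hip
        rw [if_neg h1, if_pos h2, zero_sub, neg_ne_zero, hJ', Jmat', Matrix.of_apply]
        rw [if_pos]
        · exact one_ne_zero
        · right; exact ⟨rfl, hip⟩
    · have hs : slot3 n p hn hp (i, j) = ((⟨0, by omega⟩ : Fin n), i, j) := by
        simp [slot3, hij]
      rw [hs]
      dsimp only
      have hD : ptA n p (⟨0, by omega⟩ : Fin n) = Dmat p := by simp [ptA]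
      have hD' : ptA' n p p1 (⟨0, by omega⟩ : Fin n) = Dmat p := by simp [ptA']
      simp only [hD, hD', if_pos rfl, Dmat, Matrix.of_apply, if_pos rfl]
      rw [sub_ne_zero]
      intro e
      have : (j : ℕ) = (i : ℕ) := Nat.cast_inj.mp e
      exact hij (Fin.ext this.symm)
end Fwd3

section Fwd3b
open Matrix MvPolynomial

variable {n p : ℕ}

theorem ptA_lower (m : Fin n) {r c : Fin p} (h : (c : ℕ) < (r : ℕ)) :
    ptA n p m r c = 0 := by
  rw [ptA]
  split_ifs with h1 h2
  · exact dmat_offdiag (by rw [Fin.ne_iff_vne]; omega)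
  · rw [Jmat, Matrix.of_apply, if_neg]; omega
  · rfl

theorem ptA'_lower (p1 : ℕ) (hp1 : 0 < p1) (m : Fin n) {r c : Fin p}
    (h : (c : ℕ) < (r : ℕ)) : ptA' n p p1 m r c = 0 := by
  rw [ptA']
  split_ifs with h1 h2
  · exact dmat_offdiag (by rw [Fin.ne_iff_vne]; omega)
  · rw [Jmat', Matrix.of_apply, if_neg]
    rintro (⟨e1, _⟩ | ⟨e1, e2⟩) <;> omega
  · rfl

theorem J_eq_J' (p1 : ℕ) (hp1 : 0 < p1) (hp1p : p1 < p) {r c : Fin p}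
    (hblk : ((r : ℕ) < p1 ∧ (c : ℕ) < p1) ∨ (p1 ≤ (r : ℕ) ∧ p1 ≤ (c : ℕ))) :
    Jmat p r c = Jmat' p p1 r c := by
  have hc := c.isLt
  rw [Jmat, Jmat', Matrix.of_apply, Matrix.of_apply]
  by_cases h : (r : ℕ) + 1 = (c : ℕ)
  · rw [if_pos h, if_pos]
    left; exact ⟨h, by omega⟩
  · rw [if_neg h, if_neg]
    rintro (⟨e1, _⟩ | ⟨e1, e2⟩) <;> omega

theorem cset3_mem (hn : 2 ≤ n) (hp : 3 ≤ p) (q : Fin 2 → ℕ)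
    (hq : IsOrderedPartition p q) : (ptA n p, ptA' n p (q 0)) ∈ CSet n p q 1 := by
  have hq0 : 0 < q 0 := hq.1 0
  have hq1 : 0 < q 1 := hq.1 1
  have hsum : q 0 + q 1 = p := by
    have := hq.2; rwa [Fin.sum_univ_two] at this
  refine ⟨?_, ?_, ?_⟩
  · intro m i j hji a b ha hb
    obtain ⟨rfl, rfl⟩ := fin2_cases hji
    rw [blockEntry]
    split
    · exact ptA_lower m (by simp only [off_one, off_zero]; omega)
    · rfl
  · rw [permutePart_one]
    intro m i j hji a b ha hb
    obtain ⟨rfl, rfl⟩ := fin2_cases hji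
    rw [blockEntry]
    split
    · exact ptA'_lower (q 0) hq0 m (by simp only [off_one, off_zero]; omega)
    · rfl
  · intro m i a b ha hb
    rw [permutePart_one, Equiv.Perm.one_apply, blockEntry, blockEntry]
    by_cases hcond : off q i + a < p ∧ off q i + b < p
    · rw [dif_pos hcond, dif_pos hcond]
      dsimp only
      rw [ptA, ptA']
      split_ifs with h1 h2
      · rfl
      · apply J_eq_J' (q 0) hq0 (by omega)
        have hoff : off q i = 0 ∨ off q i = q 0 := by
          have : i = 0 ∨ i = 1 := by omega
          rcases this with rfl | rfl
          · left; exact off_zero q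
          · right; exact off_one q
        rcases hoff with he | he <;> simp only [he]
        · left
          have : i = 0 := by
            by_contra hne
            have : i = 1 := by omega
            rw [this, off_one q] at he; omega
          rw [this] at ha hb
          constructor <;> omega
        · right
          constructor <;> omega
      · rfl
    · rw [dif_neg hcond, dif_neg hcond]

theorem fwd_p3 (hn : 2 ≤ n) (hp : 3 ≤ p) (q : Fin 2 → ℕ)
    (hq : IsOrderedPartition p q) :
    ¬(zClosureVV (G2Orbit (CSet n p q 1)) ⊆ zClosureVV (graphG n p)) := by
  intro hsub
  have hq0 : 0 < q 0 := hq.1 0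
  have hq1 : 0 < q 1 := hq.1 1
  have hsum : q 0 + q 1 = p := by
    have := hq.2; rwa [Fin.sum_univ_two] at this
  have hmem : (ptA n p, ptA' n p (q 0)) ∈ CSet n p q 1 := cset3_mem hn hp q hq
  have horb : (ptA n p, ptA' n p (q 0)) ∈ G2Orbit (CSet n p q 1) :=
    ⟨1, 1, (ptA n p, ptA' n p (q 0)), hmem, by rw [gconj_one, gconj_one]⟩
  have h1 : (ptA n p, ptA' n p (q 0)) ∈ zClosureVV (G2Orbit (CSet n p q 1)) := by
    rw [mem_zClosureVV_iff]; intro P hP; exact hP _ horb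
  have h2 := hsub h1
  rw [mem_zClosureVV_iff] at h2
  have h3 := h2 (Mgen n p (slot3 n p hn hp)).det
    (fun y hy => det_Mgen_vanish (by omega) _ y hy)
  rw [RingHom.map_det] at h3
  exact fwd_p3_det n p hn hp (q 0) hq0 (by omega) h3
end Fwd3b

section Fwd2
open Matrix MvPolynomial

noncomputable def ptB (n : ℕ) : MatT n 2 :=
  fun m => if (m : ℕ) = 0 then Dmat 2 else if (m : ℕ) = 1 then Jmat 2 else 0

noncomputable def ptB' (n : ℕ) : MatT n 2 :=
  fun m => if (m : ℕ) = 0 then Dmat 2 else if (m : ℕ) = 2 then Jmat 2 else 0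

noncomputable def slot2 (n : ℕ) (hn : 3 ≤ n) : Fin 2 × Fin 2 → Fin n × Fin 2 × Fin 2 :=
  fun ij => if ij.1 = ij.2 then
      (if (ij.1 : ℕ) = 0 then (⟨1, by omega⟩, 0, 1) else (⟨2, by omega⟩, 0, 1))
    else (⟨0, by omega⟩, ij.1, ij.2)

theorem fwd_p2_det (n : ℕ) (hn : 3 ≤ n) :
    ((MvPolynomial.eval (coordsVV (ptB n, ptB' n))).mapMatrix
      (Mgen n 2 (slot2 n hn))).det ≠ 0 := by
  have hB1 : ptB n (⟨1, by omega⟩ : Fin n) = Jmat 2 := by simp [ptB]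
  have hB2 : ptB n (⟨2, by omega⟩ : Fin n) = 0 := by simp [ptB]
  have hB'1 : ptB' n (⟨1, by omega⟩ : Fin n) = 0 := by simp [ptB']
  have hB'2 : ptB' n (⟨2, by omega⟩ : Fin n) = Jmat 2 := by simp [ptB']
  have hB0 : ptB n (⟨0, by omega⟩ : Fin n) = Dmat 2 := by simp [ptB]
  have hB'0 : ptB' n (⟨0, by omega⟩ : Fin n) = Dmat 2 := by simp [ptB']
  apply det_ne_zero_of_tri _ (rankb 2) (rankb_inj 2)
  · rintro ⟨i, j⟩ ⟨k, l⟩ hlt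
    rw [mapMgen_apply]
    by_cases hij : i = j
    · subst hij
      have hkl : k = l := by
        by_contra hne
        rw [rankb_diag, rankb_off hne] at hlt
        have := i.isLt; omega
      subst hkl
      rw [rankb_diag, rankb_diag] at hlt
      have hi1 : i = 1 := by rw [Fin.ext_iff]; omega
      have hk0 : k = 0 := by rw [Fin.ext_iff]; omega
      subst hi1; subst hk0
      have hs : slot2 n hn (1, 1) = ((⟨2, by omega⟩ : Fin n), 0, 1) := by
        simp [slot2]
      rw [hs]
      dsimp only
      rw [hB2, hB'2]
      norm_num [Jmat]
    · have hs : slot2 n hn (i, j) = ((⟨0, by omega⟩ : Fin n), i, j) := by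
        simp [slot2, hij]
      rw [hs]
      dsimp only
      rw [hB0, hB'0]
      have hne : ¬(k = i ∧ l = j) := by
        rintro ⟨rfl, rfl⟩
        rw [rankb_off hij] at hlt; omega
      by_cases h1 : k = i
      · have h2 : l ≠ j := fun e => hne ⟨h1, e⟩
        rw [if_pos h1, if_neg h2, dmat_offdiag h2, sub_zero]
      · rw [if_neg h1]
        by_cases h2 : l = j
        · rw [if_pos h2, dmat_offdiag (fun e => h1 e.symm), zero_sub, neg_zero]
        · simp [h2]
  · rintro ⟨i, j⟩
    rw [mapMgen_apply]
    by_cases hij : i = j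
    · subst hij
      by_cases hi : (i : ℕ) = 0
      · have hi0 : i = 0 := by rw [Fin.ext_iff]; omega
        subst hi0
        have hs : slot2 n hn (0, 0) = ((⟨1, by omega⟩ : Fin n), 0, 1) := by
          simp [slot2]
        rw [hs]
        dsimp only
        rw [hB1, hB'1]
        norm_num [Jmat]
      · have hi1 : i = 1 := by rw [Fin.ext_iff]; omega
        subst hi1
        have hs : slot2 n hn (1, 1) = ((⟨2, by omega⟩ : Fin n), 0, 1) := by
          simp [slot2]
        rw [hs]
        dsimp only
        rw [hB2, hB'2]
        norm_num [Jmat]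
    · have hs : slot2 n hn (i, j) = ((⟨0, by omega⟩ : Fin n), i, j) := by
        simp [slot2, hij]
      rw [hs]
      dsimp only
      rw [hB0, hB'0]
      simp only [if_pos rfl, Dmat, Matrix.of_apply, if_pos rfl]
      rw [sub_ne_zero]
      intro e
      have : (j : ℕ) = (i : ℕ) := Nat.cast_inj.mp e
      exact hij (Fin.ext this.symm)

theorem cset2_mem (n : ℕ) (hn : 3 ≤ n) (q : Fin 2 → ℕ)
    (hq : IsOrderedPartition 2 q) : (ptB n, ptB' n) ∈ CSet n 2 q 1 := by
  have hq0 : 0 < q 0 := hq.1 0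
  have hq1 : 0 < q 1 := hq.1 1
  have hsum : q 0 + q 1 = 2 := by
    have := hq.2; rwa [Fin.sum_univ_two] at this
  have hq0' : q 0 = 1 := by omega
  have lower : ∀ (B : MatT n 2) , (∀ m, ∀ r c : Fin 2, (c:ℕ) < (r:ℕ) → B m r c = 0) →
      B ∈ VPi n 2 q := by
    intro B hB m i j hji a b ha hb
    obtain ⟨rfl, rfl⟩ := fin2_cases hji
    rw [blockEntry]
    split
    · apply hB
      simp only [off_one, off_zero]; omega
    · rfl
  have hBlow : ∀ m, ∀ r c : Fin 2, (c:ℕ) < (r:ℕ) → ptB n m r c = 0 := by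
    intro m r c h
    rw [ptB]
    split_ifs with h1 h2
    · exact dmat_offdiag (by rw [Fin.ne_iff_vne]; omega)
    · rw [Jmat, Matrix.of_apply, if_neg]; omega
    · rfl
  have hB'low : ∀ m, ∀ r c : Fin 2, (c:ℕ) < (r:ℕ) → ptB' n m r c = 0 := by
    intro m r c h
    rw [ptB']
    split_ifs with h1 h2
    · exact dmat_offdiag (by rw [Fin.ne_iff_vne]; omega)
    · rw [Jmat, Matrix.of_apply, if_neg]; omega
    · rfl
  refine ⟨lower _ hBlow, ?_, ?_⟩
  · rw [permutePart_one]
    exact lower _ hB'low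
  · intro m i a b ha hb
    rw [permutePart_one, Equiv.Perm.one_apply, blockEntry, blockEntry]
    by_cases hcond : off q i + a < 2 ∧ off q i + b < 2
    · rw [dif_pos hcond, dif_pos hcond]
      dsimp only
      have hab : a = b := by
        have hqi : q i = 1 := by
          have : i = 0 ∨ i = 1 := by omega
          rcases this with rfl | rfl <;> omega
        omega
      subst hab
      have hdiag : ∀ m : Fin n, ∀ r : Fin 2, ptB n m r r = ptB' n m r r := by
        intro m r
        rw [ptB, ptB']
        have hJ : ∀ r : Fin 2, Jmat 2 r r = 0 := by
          intro r; rw [Jmat, Matrix.of_apply, if_neg]; omega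
        split_ifs <;> simp_all [hJ r]
      exact hdiag m _
    · rw [dif_neg hcond, dif_neg hcond]

theorem fwd_p2 (n : ℕ) (hn : 3 ≤ n) (q : Fin 2 → ℕ)
    (hq : IsOrderedPartition 2 q) :
    ¬(zClosureVV (G2Orbit (CSet n 2 q 1)) ⊆ zClosureVV (graphG n 2)) := by
  intro hsub
  have hmem : (ptB n, ptB' n) ∈ CSet n 2 q 1 := cset2_mem n hn q hq
  have horb : (ptB n, ptB' n) ∈ G2Orbit (CSet n 2 q 1) :=
    ⟨1, 1, (ptB n, ptB' n), hmem, by rw [gconj_one, gconj_one]⟩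
  have h1 : (ptB n, ptB' n) ∈ zClosureVV (G2Orbit (CSet n 2 q 1)) := by
    rw [mem_zClosureVV_iff]; intro P hP; exact hP _ horb
  have h2 := hsub h1
  rw [mem_zClosureVV_iff] at h2
  have h3 := h2 (Mgen n 2 (slot2 n hn)).det
    (fun y hy => det_Mgen_vanish (by omega) _ y hy)
  rw [RingHom.map_det] at h3
  exact fwd_p2_det n hn h3
end Fwd2

section Bwd
open Matrix MvPolynomial

variable {n p : ℕ}

/-- substitution encoding componentwise conjugation -/
noncomputable def subc (g g' : Matrix.GeneralLinearGroup (Fin p) ℂ) :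
    (Idx n p ⊕ Idx n p) → MvPolynomial (Idx n p ⊕ Idx n p) ℂ
  | Sum.inl w => ∑ k : Fin p, ∑ l : Fin p,
      C ((g : Matrix (Fin p) (Fin p) ℂ) w.2.1 k *
        ((g⁻¹ : Matrix.GeneralLinearGroup (Fin p) ℂ) : Matrix (Fin p) (Fin p) ℂ) l w.2.2) *
        X (Sum.inl (w.1, k, l))
  | Sum.inr w => ∑ k : Fin p, ∑ l : Fin p,
      C ((g' : Matrix (Fin p) (Fin p) ℂ) w.2.1 k *
        ((g'⁻¹ : Matrix.GeneralLinearGroup (Fin p) ℂ) : Matrix (Fin p) (Fin p) ℂ) l w.2.2) *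
        X (Sum.inr (w.1, k, l))

theorem conj_entry (g : Matrix.GeneralLinearGroup (Fin p) ℂ) (B : Matrix (Fin p) (Fin p) ℂ)
    (i j : Fin p) :
    (∑ k : Fin p, ∑ l : Fin p,
      ((g : Matrix (Fin p) (Fin p) ℂ) i k *
        ((g⁻¹ : Matrix.GeneralLinearGroup (Fin p) ℂ) : Matrix (Fin p) (Fin p) ℂ) l j) * B k l)
    = ((g : Matrix (Fin p) (Fin p) ℂ) * B *
        ((g⁻¹ : Matrix.GeneralLinearGroup (Fin p) ℂ) : Matrix (Fin p) (Fin p) ℂ)) i j := by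
  rw [Matrix.mul_apply]
  simp only [Matrix.mul_apply, Finset.sum_mul]
  rw [Finset.sum_comm]
  refine Finset.sum_congr rfl (fun k _ => ?_)
  refine Finset.sum_congr rfl (fun l _ => ?_)
  ring

theorem coordsVV_subc (g g' : Matrix.GeneralLinearGroup (Fin p) ℂ) (x y : MatT n p) :
    (fun idx => MvPolynomial.eval (coordsVV (x, y)) (subc (n := n) g g' idx)) =
      coordsVV (gconj g x, gconj g' y) := by
  funext idx
  rcases idx with ⟨m, i, j⟩ | ⟨m, i, j⟩ <;>
  · simp only [subc, map_sum, _root_.map_mul, eval_C, eval_X, coordsVV, Sum.elim_inl,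
      Sum.elim_inr, coordsV, gconj]
    exact conj_entry _ _ _ _

theorem eval_subc_aeval (g g' : Matrix.GeneralLinearGroup (Fin p) ℂ)
    (P : MvPolynomial (Idx n p ⊕ Idx n p) ℂ) (x y : MatT n p) :
    MvPolynomial.eval (coordsVV (x, y)) (MvPolynomial.aeval (subc g g') P) =
      MvPolynomial.eval (coordsVV (gconj g x, gconj g' y)) P := by
  rw [eval_aeval', coordsVV_subc]

theorem vanish_subc (g g' : Matrix.GeneralLinearGroup (Fin p) ℂ)
    (P : MvPolynomial (Idx n p ⊕ Idx n p) ℂ)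
    (hP : ∀ y ∈ graphG n p, MvPolynomial.eval (coordsVV y) P = 0) :
    ∀ y ∈ graphG n p,
      MvPolynomial.eval (coordsVV y) (MvPolynomial.aeval (subc g g') P) = 0 := by
  rintro _ ⟨A, h, rfl⟩
  rw [eval_subc_aeval]
  apply hP
  refine ⟨gconj g A, g' * h * g⁻¹, ?_⟩
  refine Prod.ext rfl ?_
  dsimp only
  rw [gconj_gconj, gconj_gconj]
  congr 1
  group
end Bwd

section Bwd2
open Matrix MvPolynomial

theorem m22_ext {a b c d a' b' c' d' : ℂ} (h1 : a = a') (h2 : b = b') (h3 : c = c')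
    (h4 : d = d') : !![a, b; c, d] = !![a', b'; c', d'] := by
  subst h1; subst h2; subst h3; subst h4; rfl

noncomputable def phiSub : (Idx 2 2 ⊕ Idx 2 2) → MvPolynomial (Fin 2 × Fin 4) ℂ
  | Sum.inl w =>
      if w.2.1 = 0 ∧ w.2.2 = 0 then X (w.1, 0)
      else if w.2.1 = 1 ∧ w.2.2 = 1 then X (w.1, 1)
      else if w.2.1 = 0 ∧ w.2.2 = 1 then X (w.1, 2) else 0
  | Sum.inr w =>
      if w.2.1 = 0 ∧ w.2.2 = 0 then X (w.1, 0)
      else if w.2.1 = 1 ∧ w.2.2 = 1 then X (w.1, 1)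
      else if w.2.1 = 0 ∧ w.2.2 = 1 then X (w.1, 3) else 0

noncomputable def phiMap (z : Fin 2 × Fin 4 → ℂ) : MatT 2 2 × MatT 2 2 :=
  (fun m => !![z (m, 0), z (m, 2); 0, z (m, 1)],
   fun m => !![z (m, 0), z (m, 3); 0, z (m, 1)])

theorem coords_phi (z : Fin 2 × Fin 4 → ℂ) :
    (fun idx => MvPolynomial.eval z (phiSub idx)) = coordsVV (phiMap z) := by
  funext idx
  rcases idx with ⟨m, i, j⟩ | ⟨m, i, j⟩ <;>
    fin_cases i <;> fin_cases j <;>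
    simp [phiSub, phiMap, coordsVV, coordsV]

noncomputable def fpoly : MvPolynomial (Fin 2 × Fin 4) ℂ :=
  (X (0, 2) * (X (1, 1) - X (1, 0)) - X (1, 2) * (X (0, 1) - X (0, 0))) *
  (X (0, 3) * (X (1, 1) - X (1, 0)) - X (1, 3) * (X (0, 1) - X (0, 0)))

theorem eval_fpoly (z : Fin 2 × Fin 4 → ℂ) :
    MvPolynomial.eval z fpoly =
      (z (0, 2) * (z (1, 1) - z (1, 0)) - z (1, 2) * (z (0, 1) - z (0, 0))) *
      (z (0, 3) * (z (1, 1) - z (1, 0)) - z (1, 3) * (z (0, 1) - z (0, 0))) := by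
  simp [fpoly]

theorem fpoly_ne_zero : fpoly ≠ 0 := by
  intro h
  have := congrArg (MvPolynomial.eval
    (fun w : Fin 2 × Fin 4 => !![0, 0, 1, 1; 0, 1, 0, 0] w.1 w.2)) h
  rw [eval_fpoly] at this
  norm_num at this
  rcases this with h | h <;> exact one_ne_zero h

/-- explicit upper triangular 2×2 unit -/
noncomputable def gMk (t u : ℂ) (ht : t ≠ 0) : Matrix.GeneralLinearGroup (Fin 2) ℂ :=
  ⟨!![t, u; 0, 1], !![t⁻¹, -u * t⁻¹; 0, 1],
    by
      rw [Matrix.mul_fin_two, Matrix.one_fin_two]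
      apply m22_ext <;> (field_simp; try ring),
    by
      rw [Matrix.mul_fin_two, Matrix.one_fin_two]
      apply m22_ext <;> field_simp <;> ring⟩

theorem key22 (t u a b d b' : ℂ) (ht : t ≠ 0) (hid : t * b + u * (d - a) = b') :
    !![t, u; 0, 1] * !![a, b; 0, d] * !![t⁻¹, -u * t⁻¹; 0, 1] = !![a, b'; 0, d] := by
  rw [Matrix.mul_fin_two, Matrix.mul_fin_two]
  apply m22_ext
  · field_simp; ring
  · rw [← hid]; field_simp; ring
  · simp
  · simp

theorem pair_mem_graph (a0 a1 d0 d1 b0 b1 c0 c1 : ℂ)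
    (hΔ : b0 * (d1 - a1) - b1 * (d0 - a0) ≠ 0)
    (hΔ' : c0 * (d1 - a1) - c1 * (d0 - a0) ≠ 0) :
    ((fun m : Fin 2 => if m = 0 then !![a0, b0; 0, d0] else !![a1, b1; 0, d1]),
     (fun m : Fin 2 => if m = 0 then !![a0, c0; 0, d0] else !![a1, c1; 0, d1])) ∈ graphG 2 2 := by
  have ht : (c0 * (d1 - a1) - c1 * (d0 - a0)) / (b0 * (d1 - a1) - b1 * (d0 - a0)) ≠ 0 :=
    div_ne_zero hΔ' hΔ
  refine ⟨(fun m : Fin 2 => if m = 0 then !![a0, b0; 0, d0] else !![a1, b1; 0, d1]),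
    gMk ((c0 * (d1 - a1) - c1 * (d0 - a0)) / (b0 * (d1 - a1) - b1 * (d0 - a0)))
    ((b0 * c1 - b1 * c0) / (b0 * (d1 - a1) - b1 * (d0 - a0))) ht, ?_⟩
  refine Prod.ext rfl ?_
  dsimp only
  funext m
  show _ = (gMk _ _ ht : Matrix (Fin 2) (Fin 2) ℂ) * _ *
    (((gMk _ _ ht)⁻¹ : Matrix.GeneralLinearGroup (Fin 2) ℂ) : Matrix (Fin 2) (Fin 2) ℂ)
  have hg : (gMk ((c0 * (d1 - a1) - c1 * (d0 - a0)) / (b0 * (d1 - a1) - b1 * (d0 - a0)))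
      ((b0 * c1 - b1 * c0) / (b0 * (d1 - a1) - b1 * (d0 - a0))) ht :
      Matrix (Fin 2) (Fin 2) ℂ) =
      !![(c0 * (d1 - a1) - c1 * (d0 - a0)) / (b0 * (d1 - a1) - b1 * (d0 - a0)),
        (b0 * c1 - b1 * c0) / (b0 * (d1 - a1) - b1 * (d0 - a0)); 0, 1] := rfl
  have hginv : (((gMk ((c0 * (d1 - a1) - c1 * (d0 - a0)) / (b0 * (d1 - a1) - b1 * (d0 - a0)))
      ((b0 * c1 - b1 * c0) / (b0 * (d1 - a1) - b1 * (d0 - a0))) ht)⁻¹ :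
      Matrix.GeneralLinearGroup (Fin 2) ℂ) : Matrix (Fin 2) (Fin 2) ℂ) =
      !![((c0 * (d1 - a1) - c1 * (d0 - a0)) / (b0 * (d1 - a1) - b1 * (d0 - a0)))⁻¹,
        -((b0 * c1 - b1 * c0) / (b0 * (d1 - a1) - b1 * (d0 - a0))) *
          ((c0 * (d1 - a1) - c1 * (d0 - a0)) / (b0 * (d1 - a1) - b1 * (d0 - a0)))⁻¹;
        0, 1] := rfl
  rw [hg, hginv]
  by_cases hm : m = 0
  · rw [if_pos hm]
    simp only [hm, if_pos rfl]
    refine (key22 _ _ _ _ _ _ ht ?_).symm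
    rw [div_mul_eq_mul_div, div_mul_eq_mul_div, ← add_div, div_eq_iff hΔ]
    ring
  · rw [if_neg hm]
    simp only [hm, if_neg hm]
    refine (key22 _ _ _ _ _ _ ht ?_).symm
    rw [div_mul_eq_mul_div, div_mul_eq_mul_div, ← add_div, div_eq_iff hΔ]
    ring

theorem phiMap_eq_pair (z : Fin 2 × Fin 4 → ℂ) :
    phiMap z = ((fun m : Fin 2 => if m = 0 then !![z (0,0), z (0,2); 0, z (0,1)]
        else !![z (1,0), z (1,2); 0, z (1,1)]),
      (fun m : Fin 2 => if m = 0 then !![z (0,0), z (0,3); 0, z (0,1)]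
        else !![z (1,0), z (1,3); 0, z (1,1)])) := by
  refine Prod.ext ?_ ?_ <;>
  · funext m
    fin_cases m <;> simp [phiMap]

theorem phiMap_mem_graph (z : Fin 2 × Fin 4 → ℂ)
    (hz : MvPolynomial.eval z fpoly ≠ 0) : phiMap z ∈ graphG 2 2 := by
  rw [eval_fpoly] at hz
  rw [phiMap_eq_pair]
  exact pair_mem_graph _ _ _ _ _ _ _ _ (left_ne_zero_of_mul hz) (right_ne_zero_of_mul hz)
end Bwd2

section Final
open Matrix MvPolynomial

theorem blockEntry22 (q : Fin 2 → ℕ) (hq0 : q 0 = 1) (A : MatT 2 2) (m : Fin 2)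
    (i j : Fin 2) : blockEntry q A m i j 0 0 = A m i j := by
  have hoff : ∀ k : Fin 2, off q k = (k : ℕ) := by
    intro k
    have : k = 0 ∨ k = 1 := by omega
    rcases this with rfl | rfl
    · exact off_zero q
    · rw [off_one, hq0]; rfl
  rw [blockEntry, dif_pos]
  · congr 1
    · apply Fin.ext
      show off q i + 0 = (i : ℕ)
      rw [hoff]; omega
    · apply Fin.ext
      show off q j + 0 = (j : ℕ)
      rw [hoff]; omega
  · exact ⟨by rw [hoff]; have := i.isLt; omega, by rw [hoff]; have := j.isLt; omega⟩

theorem cset22 (q : Fin 2 → ℕ) (hq : IsOrderedPartition 2 q) {AA : MatT 2 2 × MatT 2 2}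
    (h : AA ∈ CSet 2 2 q 1) :
    (∀ m, AA.1 m 1 0 = 0) ∧ (∀ m, AA.2 m 1 0 = 0) ∧
    (∀ m, AA.1 m 0 0 = AA.2 m 0 0) ∧ (∀ m, AA.1 m 1 1 = AA.2 m 1 1) := by
  have h0 := hq.1 0
  have h1 := hq.1 1
  have hsum := hq.2
  rw [Fin.sum_univ_two] at hsum
  have hq0 : q 0 = 1 := by omega
  have hq1 : q 1 = 1 := by omega
  obtain ⟨hV, hV', hD⟩ := h
  rw [permutePart_one] at hV'
  have hqpos : ∀ i : Fin 2, 0 < q i := hq.1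
  have hDD := fun (m : Fin 2) (i : Fin 2) => hD m i 0 0 (hqpos i) (hqpos i)
  simp only [permutePart_one, Equiv.Perm.one_apply] at hDD
  refine ⟨?_, ?_, ?_, ?_⟩
  · intro m
    have := hV m 1 0 (by decide) 0 0 (by omega) (by omega)
    rwa [blockEntry22 q hq0] at this
  · intro m
    have := hV' m 1 0 (by decide) 0 0 (by omega) (by omega)
    rwa [blockEntry22 q hq0] at this
  · intro m
    have := hDD m 0
    rwa [blockEntry22 q hq0, blockEntry22 q hq0] at this
  · intro m
    have := hDD m 1
    rwa [blockEntry22 q hq0, blockEntry22 q hq0] at this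

theorem core_vanish (P : MvPolynomial (Idx 2 2 ⊕ Idx 2 2) ℂ)
    (hP : ∀ y ∈ graphG 2 2, MvPolynomial.eval (coordsVV y) P = 0)
    (A A' : MatT 2 2)
    (h10 : ∀ m, A m 1 0 = 0) (h10' : ∀ m, A' m 1 0 = 0)
    (h00 : ∀ m, A m 0 0 = A' m 0 0) (h11 : ∀ m, A m 1 1 = A' m 1 1) :
    MvPolynomial.eval (coordsVV (A, A')) P = 0 := by
  have hz : ∀ z : Fin 2 × Fin 4 → ℂ, MvPolynomial.eval z (MvPolynomial.aeval phiSub P) = 0 := by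
    have hprod : (MvPolynomial.aeval phiSub P) * fpoly = 0 := by
      apply MvPolynomial.funext
      intro z
      rw [_root_.map_mul, map_zero]
      by_cases hf : MvPolynomial.eval z fpoly = 0
      · rw [hf, mul_zero]
      · have h1 : MvPolynomial.eval z (MvPolynomial.aeval phiSub P) = 0 := by
          rw [eval_aeval', coords_phi]
          exact hP (phiMap z) (phiMap_mem_graph z hf)
        rw [h1, zero_mul]
    rcases mul_eq_zero.mp hprod with h | h
    · intro z; rw [h, map_zero]
    · exact absurd h fpoly_ne_zero
  have key := hz (fun w => if w.2 = 0 then A w.1 0 0 else if w.2 = 1 then A w.1 1 1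
    else if w.2 = 2 then A w.1 0 1 else A' w.1 0 1)
  rw [eval_aeval', coords_phi] at key
  have hphi : phiMap (fun w => if w.2 = 0 then A w.1 0 0 else if w.2 = 1 then A w.1 1 1
      else if w.2 = 2 then A w.1 0 1 else A' w.1 0 1) = (A, A') := by
    refine Prod.ext ?_ ?_ <;>
    · funext m
      ext i j
      fin_cases i <;> fin_cases j <;>
        simp [phiMap, h10, h10', h00, h11]
  rwa [hphi] at key

theorem bwd22 (q : Fin 2 → ℕ) (hq : IsOrderedPartition 2 q) :
    zClosureVV (G2Orbit (CSet 2 2 q 1)) ⊆ zClosureVV (graphG 2 2) := by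
  intro x hx
  rw [mem_zClosureVV_iff] at hx ⊢
  intro P hP
  apply hx
  rintro y ⟨g, g', AA, hAA, rfl⟩
  obtain ⟨f1, f2, f3, f4⟩ := cset22 q hq hAA
  have hcv := core_vanish (MvPolynomial.aeval (subc g g') P)
    (vanish_subc g g' P hP) AA.1 AA.2 f1 f2 f3 f4
  rwa [eval_subc_aeval] at hcv
end Final


theorem stmt13 (n p : ℕ) (hn : 2 ≤ n) (hp : 2 ≤ p) (q : Fin 2 → ℕ)
    (hq : IsOrderedPartition p q) :
    zClosureVV (G2Orbit (CSet n p q 1)) ⊆ zClosureVV (graphG n p) ↔ n = 2 ∧ p = 2 := by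
  constructor
  · intro hsub
    by_contra hne
    have hcase : 3 ≤ p ∨ (p = 2 ∧ 3 ≤ n) := by omega
    rcases hcase with h | ⟨rfl, h⟩
    · exact fwd_p3 hn h q hq hsub
    · exact fwd_p2 n h q hq hsub
  · rintro ⟨rfl, rfl⟩
    exact bwd22 q hq
end
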